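/- arXiv:1910.07305 — 8 statements merged into one kernel-verified Lean document; each statement's English description precedes it below -/
import Mathlib

section
/- An interval graph on a nonempty finite set of intervals is connected if and only if the union of the intervals forms a single interval (i.e., the union is an interval of the real line). -/
/-!
In `ℝ` being an interval means being preconnected, and both sides say that the intervals are
chained by nonempty intersections. Such a chain makes a union of connected sets connected;
conversely, if the intervals fell into two subfamilies with no interval of one meeting one of the
other, the two sub-unions would be disjoint closed sets (finiteness) separating the union.
-/

/-- The interval graph of a family of closed intervals `[l v, r v]`:
two distinct vertices are adjacent iff their intervals intersect. -/
def intervalGraph {V : Type} (l r : V → ℝ) : SimpleGraph V where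
  Adj u v := u ≠ v ∧ max (l u) (l v) ≤ min (r u) (r v)
  symm := by
    constructor
    intro u v ⟨h₁, h₂⟩
    exact ⟨h₁.symm, by rw [max_comm, min_comm]; exact h₂⟩
  loopless := by constructor; intro u h; exact h.1 rfl

open Relation Set

theorem IsPreconnected.reflTransGen_of_iUnion {α ι : Type*} [TopologicalSpace α] [Finite ι]
    {s : ι → Set α} (hclosed : ∀ i, IsClosed (s i)) (hne : ∀ i, (s i).Nonempty)
    (h : IsPreconnected (⋃ i, s i)) (i j : ι) :
    ReflTransGen (fun i j : ι => (s i ∩ s j).Nonempty) i j := by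
  set S : Set ι := {k | ReflTransGen (fun i j : ι => (s i ∩ s j).Nonempty) i k}
  by_contra hj
  have hcover : (⋃ k, s k) ⊆ (⋃ k ∈ S, s k) ∪ ⋃ k ∈ Sᶜ, s k := by
    intro x hx
    obtain ⟨k, hk⟩ := mem_iUnion.1 hx
    by_cases hkS : k ∈ S
    · exact Or.inl (mem_biUnion hkS hk)
    · exact Or.inr (mem_biUnion hkS hk)
  obtain ⟨x, -, hxS, hxSc⟩ := isPreconnected_closed_iff.1 h _ _
    ((toFinite S).isClosed_biUnion fun k _ => hclosed k)
    ((toFinite Sᶜ).isClosed_biUnion fun k _ => hclosed k) hcover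
    (let ⟨x, hx⟩ := hne i; ⟨x, mem_iUnion_of_mem i hx, mem_biUnion ReflTransGen.refl hx⟩)
    (let ⟨x, hx⟩ := hne j; ⟨x, mem_iUnion_of_mem j hx, mem_biUnion hj hx⟩)
  obtain ⟨k, hkS, hxk⟩ := mem_iUnion₂.1 hxS
  obtain ⟨k', hk'S, hxk'⟩ := mem_iUnion₂.1 hxSc
  exact hk'S (ReflTransGen.tail hkS ⟨x, hxk, hxk'⟩)

theorem intervalGraph_adj_iff {V : Type} (l r : V → ℝ) {u v : V} :
    (intervalGraph l r).Adj u v ↔ u ≠ v ∧ (Icc (l u) (r u) ∩ Icc (l v) (r v)).Nonempty := by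
  rw [Icc_inter_Icc, nonempty_Icc]
  rfl

theorem intervalGraph_reachable_iff {V : Type} (l r : V → ℝ) {u v : V} :
    (intervalGraph l r).Reachable u v ↔
      ReflTransGen (fun u v : V => (Icc (l u) (r u) ∩ Icc (l v) (r v)).Nonempty) u v := by
  rw [SimpleGraph.reachable_iff_reflTransGen]
  constructor
  · exact ReflTransGen.mono (fun a b hab => ((intervalGraph_adj_iff l r).1 hab).2) u v
  · intro huv
    induction huv with
    | refl => rfl
    | @tail b c _ hbc ih =>
      rcases eq_or_ne b c with rfl | hne
      · exact ih
      · exact ih.tail ((intervalGraph_adj_iff l r).2 ⟨hne, hbc⟩)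

/-- an interval graph on a nonempty finite family of (nonempty closed)
intervals is connected iff the union of the intervals is a single interval of ℝ
(i.e. the union is order-connected). -/
theorem stmt_1 {V : Type} [Fintype V] [Nonempty V] (l r : V → ℝ)
    (hlr : ∀ v, l v ≤ r v) :
    (intervalGraph l r).Connected ↔ (⋃ v, Set.Icc (l v) (r v)).OrdConnected := by
  rw [SimpleGraph.connected_iff, ← isPreconnected_iff_ordConnected]
  simp only [SimpleGraph.Preconnected, intervalGraph_reachable_iff, and_iff_left ‹Nonempty V›]
  exact ⟨IsPreconnected.iUnion_of_reflTransGen fun v => isPreconnected_Icc,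
    IsPreconnected.reflTransGen_of_iUnion (fun v => isClosed_Icc) fun v => nonempty_Icc.2 (hlr v)⟩
end

section
/- Let S = {s_1,...,s_n} be a set of positive integers and B a positive integer. Construct a star graph with center a blue vertex c of weight B and leaves red vertices u_1,...,u_n where u_i has weight s_i. Then there exists a nonempty connected induced subgraph H of the star with Σ_{v ∈ V(H) ∩ Blue} w(v) = Σ_{v ∈ V(H) ∩ Red} w(v) if and only if there exists a subset S' ⊆ S with Σ_{s ∈ S'} s = B. -/
/-!
A balanced vertex set must contain the blue center: otherwise its blue weight is `0` while its red
weight is a nonempty sum of positive leaf weights. Any set containing the center induces a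
connected subgraph, and its balance condition says exactly that the weights of its leaves sum
to `B`. So balanced sets correspond to subsets of the leaves summing to `B`, via
`Finset.eraseNone` and `Finset.insertNone`.
-/

/-- The star graph on `Option (Fin n)`: the center `none` is adjacent to every
leaf `some i`, and there are no other edges. -/
def starGraph (n : ℕ) : SimpleGraph (Option (Fin n)) where
  Adj u v := u ≠ v ∧ (u = none ∨ v = none)
  symm := ⟨by rintro u v ⟨h₁, h₂⟩; exact ⟨h₁.symm, h₂.symm⟩⟩
  loopless := ⟨by rintro u ⟨h, _⟩; exact h rfl⟩

open Finset

theorem SimpleGraph.induce_connected_of_forall_adj {V : Type*} {G : SimpleGraph V} {s : Set V}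
    {c : V} (hc : c ∈ s) (hadj : ∀ v ∈ s, v ≠ c → G.Adj c v) : (G.induce s).Connected := by
  rw [connected_iff_exists_forall_reachable]
  refine ⟨⟨c, hc⟩, fun ⟨v, hv⟩ => ?_⟩
  by_cases hvc : v = c
  · subst hvc
    rfl
  · exact Adj.reachable (hadj v hv hvc)

theorem starGraph_adj_none {n : ℕ} {v : Option (Fin n)} (hv : v ≠ none) :
    (starGraph n).Adj none v :=
  ⟨hv.symm, Or.inl rfl⟩

namespace Finset

variable {α M : Type*} [AddCommMonoid M]

theorem sum_filter_eq_none_elim [DecidableEq α] (H : Finset (Option α)) (b : M) (f : α → M) :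
    ∑ v ∈ H.filter (fun v => v = none), v.elim b f = if none ∈ H then b else 0 := by
  rw [sum_filter]
  exact sum_ite_eq' H none _

theorem sum_filter_ne_none_elim (H : Finset (Option α)) (b : M) (f : α → M) :
    ∑ v ∈ H.filter (fun v => v ≠ none), v.elim b f = ∑ i ∈ H.eraseNone, f i := by
  classical
  simp only [filter_ne']
  rw [← map_some_eraseNone, sum_map]
  rfl

theorem eraseNone_nonempty {H : Finset (Option α)} (hH : H.Nonempty) (hnone : none ∉ H) :
    H.eraseNone.Nonempty := by
  obtain ⟨_ | i, hv⟩ := hH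
  · exact absurd hv hnone
  · exact ⟨i, mem_eraseNone.mpr hv⟩

end Finset

theorem stmt_6_general (n : ℕ) (s : Fin n → ℕ) (B : ℕ) (hs : ∀ i, 0 < s i) :
    (∃ H : Finset (Option (Fin n)), H.Nonempty ∧
      ((starGraph n).induce (↑H : Set (Option (Fin n)))).Connected ∧
      (∑ v ∈ H.filter (fun v => v = none), Option.elim v B s) =
        (∑ v ∈ H.filter (fun v => v ≠ none), Option.elim v B s)) ↔
    (∃ S' : Finset (Fin n), ∑ i ∈ S', s i = B) := by
  simp only [sum_filter_eq_none_elim, sum_filter_ne_none_elim]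
  constructor
  · rintro ⟨H, hne, -, hbal⟩
    have hcenter : none ∈ H := by
      by_contra hnone
      rw [if_neg hnone] at hbal
      have hpos : 0 < ∑ i ∈ H.eraseNone, s i :=
        sum_pos (fun i _ => hs i) (eraseNone_nonempty hne hnone)
      omega
    rw [if_pos hcenter] at hbal
    exact ⟨H.eraseNone, hbal.symm⟩
  · rintro ⟨S', hS'⟩
    refine ⟨insertNone S', insertNone_nonempty, ?_, ?_⟩
    · exact SimpleGraph.induce_connected_of_forall_adj (mem_coe.mpr none_mem_insertNone)
        fun _ _ hv => starGraph_adj_none hv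
    · rw [if_pos none_mem_insertNone, eraseNone_insertNone, hS']

/-- encode subset sum on a star. The center is a blue vertex of
weight `B > 0` and the leaves are red vertices of weights `s 1, …, s n > 0`.
The star has a nonempty connected induced subgraph whose total blue weight
equals its total red weight iff some subset of `{s 1, …, s n}` sums to `B`. -/
theorem stmt_6 (n : ℕ) (s : Fin n → ℕ) (B : ℕ) (hB : 0 < B) (hs : ∀ i, 0 < s i) :
    (∃ H : Finset (Option (Fin n)), H.Nonempty ∧
      ((starGraph n).induce (↑H : Set (Option (Fin n)))).Connected ∧
      (∑ v ∈ H.filter (fun v => v = none), Option.elim v B s) =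
        (∑ v ∈ H.filter (fun v => v ≠ none), Option.elim v B s)) ↔
    (∃ S' : Finset (Fin n), ∑ i ∈ S', s i = B) :=
  stmt_6_general n s B hs
end

section
/- Let (E, 𝓕) be an instance of Exact 3-Cover with |E| = 3k and 𝓕 = {S_1,...,S_n}, n = 3k. Construct the bipartite graph G with vertex set V_E ∪ V_𝓕 ∪ {w}, where V_E = {v_e : e ∈ E} (blue, weight 1), V_𝓕 = {v_S : S ∈ 𝓕} (red, weight n²), and w blue of weight k(n² − 3); edges are {v_e, v_S} for e ∈ S and {w, v_S} for all S ∈ 𝓕. Then 𝓕 contains a subcollection of pairwise disjoint sets covering E if and only if G contains a connected induced subgraph H with Σ_{v ∈ V(H) ∩ Blue} w(v) = Σ_{v ∈ V(H) ∩ Red} w(v) and total weight at least 2kn². -/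
/-- Vertices of the reduction graph: `inl e` is the blue vertex `v_e` (`e ∈ E`),
`inr (inl i)` is the red vertex `v_{S_i}` (`S_i ∈ 𝓕`), and `inr (inr ())` is the
extra blue vertex `w`. -/
abbrev X3CVtx (E : Type) (n : ℕ) := E ⊕ (Fin n ⊕ Unit)

/-- The bipartite reduction graph: `v_e` is adjacent to `v_{S_i}` iff `e ∈ S_i`,
and `w` is adjacent to every `v_{S_i}`. -/
def x3cGraph (E : Type) (n : ℕ) (F : Fin n → Finset E) : SimpleGraph (X3CVtx E n) :=
  SimpleGraph.fromRel (fun u v =>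
    (∃ e i, u = Sum.inl e ∧ v = Sum.inr (Sum.inl i) ∧ e ∈ F i) ∨
    (∃ i, u = Sum.inr (Sum.inl i) ∧ v = Sum.inr (Sum.inr ())))

/-- `true` on the blue vertices `V_E ∪ {w}`, `false` on the red vertices `V_𝓕`. -/
def x3cBlue {E : Type} {n : ℕ} : X3CVtx E n → Bool
  | Sum.inl _ => true
  | Sum.inr (Sum.inl _) => false
  | Sum.inr (Sum.inr _) => true

/-- Vertex weights: `v_e` has weight `1`, `v_{S_i}` has weight `n²`,
and `w` has weight `k (n² - 3)`. -/
def x3cWt {E : Type} (n k : ℕ) : X3CVtx E n → ℕ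
  | Sum.inl _ => 1
  | Sum.inr (Sum.inl _) => n ^ 2
  | Sum.inr (Sum.inr _) => k * (n ^ 2 - 3)

/-! Let `a` and `b` be the numbers of element and set vertices in `H`, and `c ∈ {0, 1}` the number
of copies of `w`. Balance reads `a + c k (n² - 3) = b n²`, and the total weight is then `2 b n²`, so `b ≥ k`. Since
`a ≤ 3k` and `c ≤ 1`, the blue weight is at most `3k + k (n² - 3) = k n²`, which forces `b = k`
and `a = 3k`. Connectivity makes every element vertex adjacent to a set vertex of `H`, so the `k`
chosen 3-sets cover the `3k` elements and must therefore be disjoint. Conversely, an exact cover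
has `k` sets, and together with all element vertices and `w` they span a balanced connected
subgraph of weight `2 k n²`. -/

open Finset SimpleGraph

theorem Finset.card_biUnion_lt_sum_card {ι α : Type*} [DecidableEq α] {s : Finset ι}
    {t : ι → Finset α} (h : ¬ (s : Set ι).PairwiseDisjoint t) :
    #(s.biUnion t) < ∑ i ∈ s, #(t i) := by
  classical
  obtain ⟨i, hi, j, hj, hij, hdisj⟩ : ∃ i ∈ s, ∃ j ∈ s, i ≠ j ∧ ¬ Disjoint (t i) (t j) := by
    simpa [Set.PairwiseDisjoint, Set.Pairwise] using h
  obtain ⟨x, hxi, hxj⟩ := Finset.not_disjoint_iff.1 hdisj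
  have hx : x ∈ t i ∩ (s.erase i).biUnion t :=
    mem_inter.2 ⟨hxi, mem_biUnion.2 ⟨j, mem_erase.2 ⟨hij.symm, hj⟩, hxj⟩⟩
  calc #(s.biUnion t) = #(t i ∪ (s.erase i).biUnion t) := by
        rw [← biUnion_insert, insert_erase hi]
    _ < #(t i) + #((s.erase i).biUnion t) := by
        have := card_union_add_card_inter (t i) ((s.erase i).biUnion t)
        have := card_pos.2 ⟨x, hx⟩
        omega
    _ ≤ #(t i) + ∑ j ∈ s.erase i, #(t j) := by gcongr; exact card_biUnion_le
    _ = ∑ i ∈ s, #(t i) := add_sum_erase s (fun j => #(t j)) hi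

theorem Finset.pairwiseDisjoint_iff_card_biUnion {ι α : Type*} [DecidableEq α] {s : Finset ι}
    {t : ι → Finset α} :
    (s : Set ι).PairwiseDisjoint t ↔ #(s.biUnion t) = ∑ i ∈ s, #(t i) :=
  ⟨card_biUnion, fun h => by_contra fun hd => (card_biUnion_lt_sum_card hd).ne h⟩

theorem Finset.pairwiseDisjoint_iff_card_mul_eq_of_forall_mem {ι α : Type*} [Fintype α]
    {F : ι → Finset α} {c : ℕ} (hF : ∀ i, #(F i) = c) {I : Finset ι}
    (hcov : ∀ a, ∃ i ∈ I, a ∈ F i) :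
    (I : Set ι).PairwiseDisjoint F ↔ #I * c = Fintype.card α := by
  classical
  have hunion : I.biUnion F = univ := eq_univ_of_forall fun a => mem_biUnion.2 (hcov a)
  simp [pairwiseDisjoint_iff_card_biUnion, hunion, hF, eq_comm]

theorem x3c_counts_eq_of_balanced {k N a b c : ℕ} (hN : 3 ≤ N) (ha : a ≤ 3 * k) (hc : c ≤ 1)
    (hbal : a + c * (k * (N - 3)) = b * N) (htot : 2 * k * N ≤ a + b * N + c * (k * (N - 3))) :
    b = k ∧ a = 3 * k := by
  obtain ⟨M, rfl⟩ : ∃ M, N = M + 3 := ⟨N - 3, by omega⟩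
  rw [Nat.add_sub_cancel] at hbal htot
  have hbk : b = k := by
    interval_cases c <;> apply le_antisymm <;> nlinarith
  refine ⟨hbk, ?_⟩
  subst hbk
  interval_cases c <;> linarith [Nat.zero_le (b * M)]

section X3C

variable {E : Type} {n : ℕ} {F : Fin n → Finset E}

theorem x3cGraph_adj_inl_iff {e : E} {v : X3CVtx E n} :
    (x3cGraph E n F).Adj (.inl e) v ↔ ∃ i, v = .inr (.inl i) ∧ e ∈ F i := by
  rcases v with _ | _ | _ <;> simp [x3cGraph]

theorem x3cGraph_adj_inl_inr_inl {e : E} {i : Fin n} :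
    (x3cGraph E n F).Adj (.inl e) (.inr (.inl i)) ↔ e ∈ F i := by
  simp [x3cGraph_adj_inl_iff]

theorem x3cGraph_adj_inr_inl_inr_inr (i : Fin n) (u : Unit) :
    (x3cGraph E n F).Adj (.inr (.inl i)) (.inr (.inr u)) := by
  simp [x3cGraph]

theorem sum_x3cWt (k : ℕ) (H : Finset (X3CVtx E n)) :
    ∑ v ∈ H, x3cWt n k v =
      #H.toLeft + #H.toRight.toLeft * n ^ 2 + #H.toRight.toRight * (k * (n ^ 2 - 3)) := by
  simp [sum_sum_eq_sum_toLeft_add_sum_toRight, x3cWt, add_assoc]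

theorem sum_x3cWt_filter_blue (k : ℕ) (H : Finset (X3CVtx E n)) :
    ∑ v ∈ H.filter (fun v => x3cBlue v = true), x3cWt n k v =
      #H.toLeft + #H.toRight.toRight * (k * (n ^ 2 - 3)) := by
  rw [sum_filter, sum_sum_eq_sum_toLeft_add_sum_toRight, sum_sum_eq_sum_toLeft_add_sum_toRight]
  simp [x3cWt, x3cBlue]

theorem sum_x3cWt_filter_red (k : ℕ) (H : Finset (X3CVtx E n)) :
    ∑ v ∈ H.filter (fun v => x3cBlue v = false), x3cWt n k v = #H.toRight.toLeft * n ^ 2 := by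
  rw [sum_filter, sum_sum_eq_sum_toLeft_add_sum_toRight, sum_sum_eq_sum_toLeft_add_sum_toRight]
  simp [x3cWt, x3cBlue]

variable [Fintype E] {k : ℕ}

theorem exists_balanced_of_exactCover (hn : n = 3 * k) (hE : Fintype.card E = 3 * k)
    (hF : ∀ i, #(F i) = 3) {I : Finset (Fin n)} (hdisj : (I : Set (Fin n)).PairwiseDisjoint F)
    (hcov : ∀ e, ∃ i ∈ I, e ∈ F i) :
    ∃ H : Finset (X3CVtx E n),
      ((x3cGraph E n F).induce (↑H : Set (X3CVtx E n))).Connected ∧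
      (∑ v ∈ H.filter (fun v => x3cBlue v = true), x3cWt n k v) =
        (∑ v ∈ H.filter (fun v => x3cBlue v = false), x3cWt n k v) ∧
      2 * k * n ^ 2 ≤ ∑ v ∈ H, x3cWt n k v := by
  have hI : #I = k := by
    have := (pairwiseDisjoint_iff_card_mul_eq_of_forall_mem hF hcov).1 hdisj
    omega
  have hw : 3 * k + k * (n ^ 2 - 3) = k * n ^ 2 := by
    have : 3 * k ≤ k * n ^ 2 := by
      rcases Nat.eq_zero_or_pos k with rfl | hk
      · simp
      · subst hn; nlinarith
    rw [Nat.mul_sub]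
    omega
  set H : Finset (X3CVtx E n) := univ.disjSum (I.disjSum univ)
  refine ⟨H, ?_, ?_, ?_⟩
  · rw [connected_iff_exists_forall_reachable]
    refine ⟨⟨.inr (.inr ()), by simp [H]⟩, ?_⟩
    have hreach : ∀ i (hi : i ∈ I), ((x3cGraph E n F).induce (H : Set (X3CVtx E n))).Reachable
        ⟨.inr (.inr ()), by simp [H]⟩ ⟨.inr (.inl i), by simp [H, hi]⟩ := fun i _ =>
      Adj.reachable (by exact (x3cGraph_adj_inr_inl_inr_inr i ()).symm)
    rintro ⟨v | i | ⟨⟩, hv⟩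
    · obtain ⟨i, hi, he⟩ := hcov v
      exact (hreach i hi).trans (Adj.reachable (by exact (x3cGraph_adj_inl_inr_inl.2 he).symm))
    · exact hreach i (by simpa [H] using hv)
    · rfl
  · rw [sum_x3cWt_filter_blue, sum_x3cWt_filter_red]
    simp [H, hI, hE, hw]
  · rw [sum_x3cWt]
    simp only [H, toLeft_disjSum, toRight_disjSum, card_univ, Fintype.card_unit, hE, hI, one_mul]
    linarith

theorem exists_exactCover_of_balanced (hn : n = 3 * k) (hE : Fintype.card E = 3 * k)
    (hF : ∀ i, #(F i) = 3) {H : Finset (X3CVtx E n)}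
    (hconn : ((x3cGraph E n F).induce (↑H : Set (X3CVtx E n))).Connected)
    (hbal : (∑ v ∈ H.filter (fun v => x3cBlue v = true), x3cWt n k v) =
        (∑ v ∈ H.filter (fun v => x3cBlue v = false), x3cWt n k v))
    (htot : 2 * k * n ^ 2 ≤ ∑ v ∈ H, x3cWt n k v) :
    ∃ I : Finset (Fin n), (I : Set (Fin n)).PairwiseDisjoint F ∧ ∀ e, ∃ i ∈ I, e ∈ F i := by
  rcases isEmpty_or_nonempty E with hE₀ | hE₀
  · exact ⟨∅, by simp, isEmptyElim⟩
  have hk : 1 ≤ k := by have := Fintype.card_pos (α := E); omega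
  rw [sum_x3cWt_filter_blue, sum_x3cWt_filter_red] at hbal
  rw [sum_x3cWt] at htot
  obtain ⟨hI, hcardLeft⟩ := x3c_counts_eq_of_balanced (by subst hn; nlinarith)
    (hE ▸ card_le_univ _) (card_le_univ _) hbal (by linarith)
  have hleft : H.toLeft = univ := eq_univ_of_card _ (hcardLeft.trans hE.symm)
  obtain ⟨i₀, hi₀⟩ : H.toRight.toLeft.Nonempty := card_pos.1 (by omega)
  have hcov : ∀ e, ∃ i ∈ H.toRight.toLeft, e ∈ F i := by
    intro e
    have he : .inl e ∈ H := mem_toLeft.1 (hleft ▸ mem_univ e)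
    have : Nontrivial (↑H : Set (X3CVtx E n)) :=
      nontrivial_of_ne ⟨.inl e, he⟩ ⟨.inr (.inl i₀), by simpa using hi₀⟩ (by simp)
    obtain ⟨⟨v, hv⟩, hadj⟩ := hconn.preconnected.exists_adj_of_nontrivial ⟨.inl e, he⟩
    obtain ⟨i, rfl, hei⟩ := x3cGraph_adj_inl_iff.1 hadj
    exact ⟨i, by simpa using hv, hei⟩
  exact ⟨_, (pairwiseDisjoint_iff_card_mul_eq_of_forall_mem hF hcov).2 (by rw [hI, hE]; ring),
    hcov⟩

end X3C

theorem stmt_7_general (E : Type) [Fintype E] (k n : ℕ)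
    (hn : n = 3 * k) (hE : Fintype.card E = 3 * k)
    (F : Fin n → Finset E) (hF : ∀ i, (F i).card = 3) :
    (∃ I : Finset (Fin n),
      (I : Set (Fin n)).Pairwise (fun i j => Disjoint (F i) (F j)) ∧
      ∀ e : E, ∃ i ∈ I, e ∈ F i) ↔
    (∃ H : Finset (X3CVtx E n),
      ((x3cGraph E n F).induce (↑H : Set (X3CVtx E n))).Connected ∧
      (∑ v ∈ H.filter (fun v => x3cBlue v = true), x3cWt n k v) =
        (∑ v ∈ H.filter (fun v => x3cBlue v = false), x3cWt n k v) ∧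
      2 * k * n ^ 2 ≤ ∑ v ∈ H, x3cWt n k v) :=
  ⟨fun ⟨_, hdisj, hcov⟩ => exists_balanced_of_exactCover hn hE hF hdisj hcov,
    fun ⟨_, hconn, hbal, htot⟩ => exists_exactCover_of_balanced hn hE hF hconn hbal htot⟩

/-- with `|E| = 3k` and `𝓕 = {S_1,…,S_n}`, `n = 3k`, a collection of
3-element subsets, `𝓕` has an exact 3-cover (a pairwise disjoint subcollection
covering `E`) iff the reduction graph has a connected induced subgraph whose blue
and red total weights are equal and whose total weight is at least `2kn²`. -/
theorem stmt_7 (E : Type) [Fintype E] [DecidableEq E] (k n : ℕ)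
    (hn : n = 3 * k) (hE : Fintype.card E = 3 * k)
    (F : Fin n → Finset E) (hF : ∀ i, (F i).card = 3) :
    (∃ I : Finset (Fin n),
      (I : Set (Fin n)).Pairwise (fun i j => Disjoint (F i) (F j)) ∧
      ∀ e : E, ∃ i ∈ I, e ∈ F i) ↔
    (∃ H : Finset (X3CVtx E n),
      ((x3cGraph E n F).induce (↑H : Set (X3CVtx E n))).Connected ∧
      (∑ v ∈ H.filter (fun v => x3cBlue v = true), x3cWt n k v) =
        (∑ v ∈ H.filter (fun v => x3cBlue v = false), x3cWt n k v) ∧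
      2 * k * n ^ 2 ≤ ∑ v ∈ H, x3cWt n k v) :=
  stmt_7_general E k n hn hE F hF
end

section
/- In the Exact 3-Cover reduction graph G (with |E| = 3k, |𝓕| = n = 3k, blue weights: v_e has weight 1, w has weight k(n² − 3); red weights: v_S has weight n²), every connected induced weight-balanced subgraph has total weight at most 2kn², and a weight-balanced subgraph of total weight exactly 2kn² contains exactly k vertices of V_𝓕, all vertices of V_E, and w. -/
section WeightBalanced

variable {V : Type*} (c : V → Bool) (w : V → ℕ)

theorem sum_eq_two_mul_sum_blue_of_balanced {H : Finset V}
    (hbal : ∑ v ∈ H.filter (fun v => c v = true), w v =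
      ∑ v ∈ H.filter (fun v => c v = false), w v) :
    ∑ v ∈ H, w v = 2 * ∑ v ∈ H.filter (fun v => c v = true), w v := by
  rw [← Finset.sum_filter_add_sum_filter_not H (fun v => c v = true)]
  simp only [Bool.not_eq_true]
  omega

variable [Fintype V]

theorem sum_blue_le_sum_blue_univ (H : Finset V) :
    ∑ v ∈ H.filter (fun v => c v = true), w v ≤
      ∑ v ∈ Finset.univ.filter (fun v => c v = true), w v :=
  Finset.sum_le_sum_of_subset (Finset.filter_subset_filter _ (Finset.subset_univ H))

theorem mem_of_sum_blue_eq_sum_blue_univ {H : Finset V}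
    (h : ∑ v ∈ H.filter (fun v => c v = true), w v =
      ∑ v ∈ Finset.univ.filter (fun v => c v = true), w v)
    (x : V) (hx : c x = true) (hwx : 0 < w x) : x ∈ H := by
  by_contra hxH
  have hlt := Finset.sum_lt_sum_of_subset
    (Finset.filter_subset_filter _ (Finset.subset_univ H))
    (Finset.mem_filter.mpr ⟨Finset.mem_univ x, hx⟩ :
      x ∈ Finset.univ.filter (fun v => c v = true))
    (fun hxH' => hxH (Finset.mem_filter.mp hxH').1) hwx (fun _ _ _ => Nat.zero_le _)
  omega

end WeightBalanced

theorem x3c_sum_blue_univ (E : Type) [Fintype E] (n k : ℕ) :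
    ∑ v ∈ Finset.univ.filter (fun v : X3CVtx E n => x3cBlue v = true), x3cWt n k v =
      Fintype.card E + k * (n ^ 2 - 3) := by
  rw [Finset.sum_filter, Fintype.sum_sum_type, Fintype.sum_sum_type]
  simp [x3cBlue, x3cWt]

theorem x3c_sum_red {E : Type} {n : ℕ} (k : ℕ) (H : Finset (X3CVtx E n)) :
    ∑ v ∈ H.filter (fun v => x3cBlue v = false), x3cWt n k v =
      (H.filter (fun v => x3cBlue v = false)).card * n ^ 2 := by
  refine Finset.sum_const_nat fun v hv => ?_
  have hred := (Finset.mem_filter.mp hv).2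
  rcases v with _ | _ | _ <;> simp_all [x3cBlue, x3cWt]

theorem stmt_8_general (E : Type) [Fintype E] (k n : ℕ) (hk : 0 < k)
    (hn : n = 3 * k) (hE : Fintype.card E = 3 * k)
    (F : Fin n → Finset E) :
    (∀ H : Finset (X3CVtx E n),
      ((x3cGraph E n F).induce (↑H : Set (X3CVtx E n))).Connected →
      (∑ v ∈ H.filter (fun v => x3cBlue v = true), x3cWt n k v) =
        (∑ v ∈ H.filter (fun v => x3cBlue v = false), x3cWt n k v) →
      (∑ v ∈ H, x3cWt n k v) ≤ 2 * k * n ^ 2) ∧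
    (∀ H : Finset (X3CVtx E n),
      (∑ v ∈ H.filter (fun v => x3cBlue v = true), x3cWt n k v) =
        (∑ v ∈ H.filter (fun v => x3cBlue v = false), x3cWt n k v) →
      (∑ v ∈ H, x3cWt n k v) = 2 * k * n ^ 2 →
      (H.filter (fun v => x3cBlue v = false)).card = k ∧
      (∀ e : E, Sum.inl e ∈ H) ∧ Sum.inr (Sum.inr ()) ∈ H) := by
  have hn9 : 9 ≤ n ^ 2 := by subst hn; nlinarith
  have hblue : ∑ v ∈ Finset.univ.filter (fun v : X3CVtx E n => x3cBlue v = true),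
      x3cWt n k v = k * n ^ 2 := by
    rw [x3c_sum_blue_univ, hE, Nat.mul_sub, Nat.mul_comm 3 k]
    have : k * 3 ≤ k * n ^ 2 := Nat.mul_le_mul_left k (by omega)
    omega
  refine ⟨fun H _ hbal => ?_, fun H hbal htot => ?_⟩
  · rw [sum_eq_two_mul_sum_blue_of_balanced _ _ hbal, Nat.mul_assoc]
    exact Nat.mul_le_mul_left 2 ((sum_blue_le_sum_blue_univ _ _ H).trans_eq hblue)
  · have hB : ∑ v ∈ H.filter (fun v => x3cBlue v = true), x3cWt n k v = k * n ^ 2 := by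
      rw [sum_eq_two_mul_sum_blue_of_balanced _ _ hbal, Nat.mul_assoc] at htot
      omega
    have hfull := mem_of_sum_blue_eq_sum_blue_univ x3cBlue (x3cWt n k) (hB.trans hblue.symm)
    refine ⟨?_, fun e => hfull (.inl e) rfl Nat.one_pos,
      hfull (.inr (.inr ())) rfl (Nat.mul_pos hk (by omega))⟩
    rw [hB, x3c_sum_red] at hbal
    exact (Nat.eq_of_mul_eq_mul_right (by omega) hbal).symm

/-- in the Exact 3-Cover reduction graph (with `|E| = 3k`, `n = 3k`,
`k ≥ 1`), every connected induced weight-balanced subgraph has total weight at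
most `2kn²`; and every weight-balanced subgraph of total weight exactly `2kn²`
contains exactly `k` vertices of `V_𝓕`, all vertices of `V_E`, and `w`. -/
theorem stmt_8 (E : Type) [Fintype E] [DecidableEq E] (k n : ℕ) (hk : 0 < k)
    (hn : n = 3 * k) (hE : Fintype.card E = 3 * k)
    (F : Fin n → Finset E) (hF : ∀ i, (F i).card = 3) :
    (∀ H : Finset (X3CVtx E n),
      ((x3cGraph E n F).induce (↑H : Set (X3CVtx E n))).Connected →
      (∑ v ∈ H.filter (fun v => x3cBlue v = true), x3cWt n k v) =
        (∑ v ∈ H.filter (fun v => x3cBlue v = false), x3cWt n k v) →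
      (∑ v ∈ H, x3cWt n k v) ≤ 2 * k * n ^ 2) ∧
    (∀ H : Finset (X3CVtx E n),
      (∑ v ∈ H.filter (fun v => x3cBlue v = true), x3cWt n k v) =
        (∑ v ∈ H.filter (fun v => x3cBlue v = false), x3cWt n k v) →
      (∑ v ∈ H, x3cWt n k v) = 2 * k * n ^ 2 →
      (H.filter (fun v => x3cBlue v = false)).card = k ∧
      (∀ e : E, Sum.inl e ∈ H) ∧ Sum.inr (Sum.inr ()) ∈ H) :=
  stmt_8_general E k n hk hn hE F
end

section
/- If a bipartite graph G with parts X and Y has a connected induced weight-balanced subgraph of total weight W, then the split graph G' obtained from G by adding all edges between pairs of vertices of X also has a connected induced weight-balanced subgraph of total weight at least W; conversely, in the Exact 3-Cover reduction instance, G' has a weight-balanced connected subgraph of total weight 2kn² if and only if G does. -/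
/-- The graph obtained from `G` by adding all edges between pairs of distinct
vertices of `X` (turning `X` into a clique). -/
def addClique {V : Type} (G : SimpleGraph V) (X : Finset V) : SimpleGraph V :=
  G ⊔ SimpleGraph.fromRel (fun u v => u ∈ X ∧ v ∈ X)

/-- The set `V_𝓕` of red vertices of the reduction graph. -/
def x3cRedSet (E : Type) [Fintype E] [DecidableEq E] (n : ℕ) : Finset (X3CVtx E n) :=
  Finset.univ.image (fun i : Fin n => Sum.inr (Sum.inl i))

namespace SimpleGraph

variable {V : Type}

theorem Reachable.of_adj_imp_reachable {G G' : SimpleGraph V}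
    (h : ∀ u v, G'.Adj u v → G.Reachable u v) {u v : V} (huv : G'.Reachable u v) :
    G.Reachable u v := by
  obtain ⟨p⟩ := huv
  induction p with
  | nil => rfl
  | cons hadj _ ih => exact (h _ _ hadj).trans ih

theorem induce_le_induce_addClique (G : SimpleGraph V) (X : Finset V) (s : Set V) :
    G.induce s ≤ (addClique G X).induce s :=
  comap_monotone _ le_sup_left

theorem Connected.of_induce_addClique {G : SimpleGraph V} {X : Finset V} {s : Set V} {z : V}
    (hz : z ∈ s) (hX : ∀ x ∈ s, x ∈ X → G.Adj x z)
    (h : ((addClique G X).induce s).Connected) : (G.induce s).Connected := by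
  have hXz : ∀ x : s, x.1 ∈ X → (G.induce s).Reachable x ⟨z, hz⟩ := fun x hx =>
    Adj.reachable (G := G.induce s) (hX x x.2 hx)
  have hadj : ∀ a b : s, ((addClique G X).induce s).Adj a b → (G.induce s).Reachable a b := by
    rintro a b (hab | ⟨-, ⟨ha, hb⟩ | ⟨hb, ha⟩⟩)
    · exact Adj.reachable (G := G.induce s) hab
    · exact (hXz a ha).trans (hXz b hb).symm
    · exact (hXz a ha).trans (hXz b hb).symm
  exact (connected_iff _).2
    ⟨fun a b => (h.preconnected a b).of_adj_imp_reachable hadj, h.nonempty⟩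

end SimpleGraph

open SimpleGraph

section X3C

variable {E : Type} {n k : ℕ}

theorem x3cGraph_adj_hub [Fintype E] [DecidableEq E] {F : Fin n → Finset E} {x : X3CVtx E n}
    (hx : x ∈ x3cRedSet E n) : (x3cGraph E n F).Adj x (Sum.inr (Sum.inr ())) := by
  obtain ⟨i, -, rfl⟩ := Finset.mem_image.1 hx
  simp [x3cGraph]

theorem x3c_sum_blue_le_card [Fintype E] {H : Finset (X3CVtx E n)}
    (hz : Sum.inr (Sum.inr ()) ∉ H) :
    ∑ v ∈ H.filter (fun v => x3cBlue v = true), x3cWt n k v ≤ Fintype.card E :=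
  calc ∑ v ∈ H.filter (fun v => x3cBlue v = true), x3cWt n k v
      ≤ ∑ v ∈ Finset.univ.map Function.Embedding.inl, x3cWt n k v := by
        refine Finset.sum_le_sum_of_subset fun v hv => ?_
        rw [Finset.mem_filter] at hv
        rcases v with e | i | ⟨⟨⟩⟩ <;> simp_all [x3cBlue]
    _ = Fintype.card E := by simp [x3cWt]

theorem x3c_hub_mem [Fintype E] (hn : n = 3 * k) (hcard : Fintype.card E = 3 * k)
    {H : Finset (X3CVtx E n)} (hH : H.Nonempty)
    (hbal : ∑ v ∈ H.filter (fun v => x3cBlue v = true), x3cWt n k v =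
      ∑ v ∈ H.filter (fun v => x3cBlue v = false), x3cWt n k v)
    (htot : ∑ v ∈ H, x3cWt n k v = 2 * k * n ^ 2) :
    Sum.inr (Sum.inr ()) ∈ H := by
  by_contra hz
  subst hn
  rcases Nat.eq_zero_or_pos k with rfl | hk
  · obtain ⟨e | i | ⟨⟨⟩⟩, hv⟩ := hH
    · exact (Fintype.card_eq_zero_iff.1 hcard).false e
    · exact i.elim0
    · exact hz hv
  · have hsplit := Finset.sum_filter_add_sum_filter_not H (fun v => x3cBlue v = true) (x3cWt _ k)
    simp only [Bool.not_eq_true] at hsplit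
    have hle := x3c_sum_blue_le_card (k := k) hz
    nlinarith

end X3C

/-- (1) If a bipartite graph `G` with parts `X` (red) and `Xᶜ` (blue)
has a connected induced weight-balanced subgraph of total weight `W`, then the
split graph obtained by turning `X` into a clique has one of total weight `≥ W`.
(2) In the Exact 3-Cover reduction instance, the split graph `G'` (obtained by
turning `V_𝓕` into a clique) has a weight-balanced connected subgraph of total
weight `2kn²` iff the bipartite graph `G` does. -/
theorem stmt_9 :
    (∀ (V : Type) [Fintype V] [DecidableEq V] (G : SimpleGraph V) (X : Finset V),
      (∀ u v : V, G.Adj u v → (u ∈ X ↔ v ∉ X)) →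
      ∀ (w : V → ℕ) (W : ℕ),
      (∃ H : Finset V, (G.induce (↑H : Set V)).Connected ∧
        (∑ v ∈ H.filter (fun v => v ∉ X), w v) =
          (∑ v ∈ H.filter (fun v => v ∈ X), w v) ∧
        (∑ v ∈ H, w v) = W) →
      (∃ H : Finset V, ((addClique G X).induce (↑H : Set V)).Connected ∧
        (∑ v ∈ H.filter (fun v => v ∉ X), w v) =
          (∑ v ∈ H.filter (fun v => v ∈ X), w v) ∧
        W ≤ ∑ v ∈ H, w v)) ∧
    (∀ (E : Type) [Fintype E] [DecidableEq E] (k n : ℕ), n = 3 * k →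
      Fintype.card E = 3 * k → ∀ (F : Fin n → Finset E), (∀ i, (F i).card = 3) →
      ((∃ H : Finset (X3CVtx E n),
        ((addClique (x3cGraph E n F) (x3cRedSet E n)).induce
          (↑H : Set (X3CVtx E n))).Connected ∧
        (∑ v ∈ H.filter (fun v => x3cBlue v = true), x3cWt n k v) =
          (∑ v ∈ H.filter (fun v => x3cBlue v = false), x3cWt n k v) ∧
        (∑ v ∈ H, x3cWt n k v) = 2 * k * n ^ 2) ↔
      (∃ H : Finset (X3CVtx E n),
        ((x3cGraph E n F).induce (↑H : Set (X3CVtx E n))).Connected ∧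
        (∑ v ∈ H.filter (fun v => x3cBlue v = true), x3cWt n k v) =
          (∑ v ∈ H.filter (fun v => x3cBlue v = false), x3cWt n k v) ∧
        (∑ v ∈ H, x3cWt n k v) = 2 * k * n ^ 2))) := by
  refine ⟨?_, fun E _ _ k n hn hcard F _ => ⟨?_, ?_⟩⟩
  · rintro V _ _ G X - w W ⟨H, hc, hbal, rfl⟩
    exact ⟨H, hc.mono (induce_le_induce_addClique G X H), hbal, le_rfl⟩
  · rintro ⟨H, hc, hbal, htot⟩
    have hz := x3c_hub_mem hn hcard (Finset.coe_nonempty.1 (Set.nonempty_coe_sort.1 hc.nonempty))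
      hbal htot
    exact ⟨H, hc.of_induce_addClique hz (fun x _ hx => x3cGraph_adj_hub hx), hbal, htot⟩
  · rintro ⟨H, hc, hbal, htot⟩
    exact ⟨H, hc.mono (induce_le_induce_addClique _ _ _), hbal, htot⟩
end

section
/- Let G = (V, E) be a connected bicolored graph with red vertex set R and blue vertex set B, let F be a subtree of G with red vertices R_F = V(F) ∩ R such that F has at most as many blue vertices as red vertices (|V(F) ∩ B| ≤ |R_F|), and F is an inclusion-minimal (minimum-edge) tree with V(F) ∩ R = R_F. If there exists a connected induced subgraph H of G with V(H) ∩ R = R_F and |V(H) ∩ B| = |V(H) ∩ R|, then there exists such a balanced connected subgraph H' with V(F) ⊆ V(H') obtained from V(F) by repeatedly adding blue vertices adjacent to the current set. -/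
/-!
Grow `V(F)` greedily by blue vertices of the balanced subgraph `H`. As long as the current
connected set `S` has fewer blue vertices than `H`, some blue vertex of `H` lies outside `S`;
since `H` is connected and meets `S`, a walk in `H` leaves `S` along an edge, and its endpoint
outside `S` is blue because every red vertex of `H` is already in `V(F) ⊆ S`. Adding it keeps
`S` connected and its red part equal to `R_F`, so the blue count climbs to `|R_F|`.
-/
namespace SimpleGraph

variable {V : Type*} {G : SimpleGraph V}

lemma Connected.induce_insert {S : Set V} {x y : V} (hS : (G.induce S).Connected)
    (hx : x ∈ S) (hxy : G.Adj x y) : (G.induce (insert y S)).Connected := by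
  have hyS : insert y S = S ∪ {x, y} := by
    rw [Set.union_insert, Set.union_singleton, Set.insert_eq_of_mem (Set.mem_insert_of_mem y hx)]
  rw [hyS]
  exact induce_union_connected hS.preconnected (induce_pair_connected_of_adj hxy).preconnected
    ⟨x, hx, Set.mem_insert x {y}⟩

lemma exists_adj_mem_diff_of_induce_preconnected {H S : Set V}
    (hH : (G.induce H).Preconnected) (hHS : (H ∩ S).Nonempty) (hHS' : ¬ H ⊆ S) :
    ∃ x ∈ S, ∃ y ∈ H \ S, G.Adj x y := by
  obtain ⟨b, hbH, hbS⟩ := Set.not_subset.mp hHS'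
  obtain ⟨r, hrH, hrS⟩ := hHS
  obtain ⟨p⟩ := hH ⟨b, hbH⟩ ⟨r, hrH⟩
  obtain ⟨d, -, hd₁, hd₂⟩ :=
    p.exists_boundary_dart {v : H | (v : V) ∉ S} hbS (by simpa using hrS)
  exact ⟨d.snd, not_not.mp hd₂, d.fst, ⟨d.fst.2, hd₁⟩, d.adj.symm⟩

variable [Finite V] (R : Set V)

lemma exists_induce_connected_insert_notMem {H S : Set V} (hH : (G.induce H).Preconnected)
    (hS : (G.induce S).Connected) (hHS : (H ∩ S).Nonempty) (hHR : H ∩ R ⊆ S)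
    (hlt : (S ∩ Rᶜ).ncard < (H ∩ Rᶜ).ncard) :
    ∃ y ∉ R, y ∉ S ∧ (G.induce (insert y S)).Connected := by
  have hHS' : ¬ H ⊆ S := fun hsub =>
    hlt.not_ge (Set.ncard_le_ncard (Set.inter_subset_inter_left _ hsub))
  obtain ⟨x, hx, y, ⟨hyH, hyS⟩, hxy⟩ :=
    exists_adj_mem_diff_of_induce_preconnected hH hHS hHS'
  exact ⟨y, fun hyR => hyS (hHR ⟨hyH, hyR⟩), hyS, hS.induce_insert hx hxy⟩

lemma exists_induce_connected_superset_ncard_compl {H S : Set V}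
    (hH : (G.induce H).Preconnected) (hS : (G.induce S).Connected) (hHS : (H ∩ S).Nonempty)
    (hHR : H ∩ R ⊆ S) {k : ℕ} (hSk : (S ∩ Rᶜ).ncard ≤ k)
    (hkH : k ≤ (H ∩ Rᶜ).ncard) :
    ∃ T, S ⊆ T ∧ (G.induce T).Connected ∧ T ∩ R = S ∩ R ∧ (T ∩ Rᶜ).ncard = k := by
  induction k, hSk using Nat.le_induction with
  | base => exact ⟨S, subset_rfl, hS, rfl, rfl⟩
  | succ k _ ih =>
    obtain ⟨T, hST, hT, hTR, hTk⟩ := ih (Nat.le_of_succ_le hkH)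
    obtain ⟨y, hyR, hyT, hyT'⟩ := exists_induce_connected_insert_notMem R hH hT
      (hHS.mono (Set.inter_subset_inter_right _ hST)) (hHR.trans hST) (hTk ▸ hkH)
    refine ⟨insert y T, hST.trans (Set.subset_insert _ _), hyT', ?_, ?_⟩
    · rw [Set.insert_inter_of_notMem hyR, hTR]
    · rw [Set.insert_inter_of_mem hyR, Set.ncard_insert_of_notMem fun h => hyT h.1, hTk]

end SimpleGraph

open SimpleGraph in
theorem stmt_10_general {V : Type} [Fintype V] (G : SimpleGraph V)
    (R : Set V) (F : G.Subgraph) (RF : Set V)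
    (hRF : F.verts ∩ R = RF)
    (htree : F.coe.IsTree)
    (hblue : (F.verts ∩ Rᶜ).ncard ≤ RF.ncard)
    (hH : ∃ H : Set V, (G.induce H).Connected ∧ H ∩ R = RF ∧
      (H ∩ Rᶜ).ncard = (H ∩ R).ncard) :
    ∃ H' : Set V, F.verts ⊆ H' ∧ (G.induce H').Connected ∧ H' ∩ R = RF ∧
      (H' ∩ Rᶜ).ncard = (H' ∩ R).ncard := by
  obtain ⟨H, hH, hHR, hHbal⟩ := hH
  have hFconn : (G.induce F.verts).Connected :=
    (Subgraph.connected_iff'.mpr htree.connected).induce_verts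
  have hRF_F : RF ⊆ F.verts := hRF ▸ Set.inter_subset_left
  have hRF_H : RF ⊆ H := hHR ▸ Set.inter_subset_left
  have hRF_ne : RF.Nonempty := by
    obtain ⟨⟨v, hv⟩⟩ := hFconn.nonempty
    by_cases hvR : v ∈ R
    · exact ⟨v, hRF ▸ ⟨hv, hvR⟩⟩
    · have hpos : 0 < (F.verts ∩ Rᶜ).ncard := (Set.ncard_pos).2 ⟨v, hv, hvR⟩
      exact Set.nonempty_of_ncard_ne_zero (hpos.trans_le hblue).ne'
  obtain ⟨T, hFT, hT, hTR, hTblue⟩ := exists_induce_connected_superset_ncard_compl R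
    hH.preconnected hFconn (hRF_ne.mono (Set.subset_inter hRF_H hRF_F)) (hHR ▸ hRF_F) hblue
    (by rw [hHbal, hHR])
  exact ⟨T, hFT, hT, hTR.trans hRF, by rw [hTblue, hTR, hRF]⟩

/-- Let `G` be a connected bicolored graph with red vertices `R`
(the blue vertices being `Rᶜ`), and let `F` be a tree subgraph of `G` with
`V(F) ∩ R = R_F`, having at most as many blue as red vertices, and having the
minimum number of edges among all tree subgraphs `T` with `V(T) ∩ R = R_F`.
If some connected induced subgraph `H` with `V(H) ∩ R = R_F` is balanced
(equally many blue and red vertices), then there is a balanced connected induced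
subgraph `H'` with `V(H') ∩ R = R_F` containing all the vertices of `F`. -/
theorem stmt_10 {V : Type} [Fintype V] (G : SimpleGraph V) (hG : G.Connected)
    (R : Set V) (F : G.Subgraph) (RF : Set V)
    (hRF : F.verts ∩ R = RF)
    (htree : F.coe.IsTree)
    (hmin : ∀ F' : G.Subgraph, F'.coe.IsTree → F'.verts ∩ R = RF →
      F.edgeSet.ncard ≤ F'.edgeSet.ncard)
    (hblue : (F.verts ∩ Rᶜ).ncard ≤ RF.ncard)
    (hH : ∃ H : Set V, (G.induce H).Connected ∧ H ∩ R = RF ∧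
      (H ∩ Rᶜ).ncard = (H ∩ R).ncard) :
    ∃ H' : Set V, F.verts ⊆ H' ∧ (G.induce H').Connected ∧ H' ∩ R = RF ∧
      (H' ∩ Rᶜ).ncard = (H' ∩ R).ncard :=
  stmt_10_general G R F RF hRF htree hblue hH
end

section
/- Let T be a finite tree and X a set of at least 3 vertices of T such that every leaf of T belongs to X. Then for any vertex v ∈ X, either v is an internal vertex of T and the edge set of T can be partitioned into two edge-disjoint subtrees T_1 and T_2, both containing v, such that (X ∩ V(T_1)) \ {v} and (X ∩ V(T_2)) \ {v} are both nonempty and partition X \ {v}; or v is a leaf of T and there is a vertex w and a partition of E(T) into three edge-disjoint subtrees F_1, F_2, F_3 where F_1 is the path from v to w, and F_2 and F_3 both contain w and induce a nontrivial partition of (X \ {v}) between them. -/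
/-!
Root the tree at a vertex `r` and describe it metrically: `y` lies on the path from `x` to `z`
iff `dist x y + dist y z = dist x z`, and the branch below `u` is the set of `x` with `u` on the
path from `r` to `x`. Branches, and branches with a sub-branch removed, are geodesically
star-shaped, hence induce subtrees, and the only edge leaving the branch below `u` joins `u` to
its parent. So splitting the branch below `c` along a child `u` cuts its edges into two subtrees
through `c`. The branch below any `u ≠ r` contains a leaf other than `r`, and leaves lie in `X`.

If `v` is internal, root at `v` and split along a neighbour `u₀`: leaves below `u₀` and below
another neighbour separate `X \ {v}`. Otherwise let `w` be the lowest common ancestor of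
`X \ {v}` in the tree rooted at `v`. As all leaves lie in `X`, every vertex lies on the path from
`v` to `w` or below `w`, and by maximality of `w` the branch below `w` splits along a child with
some, but not all, of `X \ {v}` below it.
-/

/-- `(S, A)` is a subtree of the tree `T`: `A` is a set of edges of `T` whose
endpoints all lie in `S`, and the graph with vertex set `S` and edge set `A` is
connected (it is automatically acyclic, being a subgraph of a tree). -/
def IsSubtree {V : Type} (T : SimpleGraph V) (S : Set V) (A : Set (Sym2 V)) : Prop :=
  A ⊆ T.edgeSet ∧ (∀ e ∈ A, ∀ x ∈ e, x ∈ S) ∧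
    ((SimpleGraph.fromEdgeSet A).induce S).Connected

namespace SimpleGraph

variable {V : Type*} {G : SimpleGraph V} {a b c r u v w x y z : V}

def Between (G : SimpleGraph V) (x y z : V) : Prop :=
  G.dist x y + G.dist y z = G.dist x z

namespace Between

lemma refl_left : G.Between x x y := by simp [Between]

lemma refl_right : G.Between x y y := by simp [Between]

lemma symm (h : G.Between x y z) : G.Between z y x := by
  unfold Between at *
  rw [dist_comm (u := z) (v := y), dist_comm (u := y) (v := x), dist_comm (u := z)]
  omega

variable (hG : G.Connected)
include hG

lemma trans_left (h₁ : G.Between w y z) (h₂ : G.Between w x y) : G.Between w x z := by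
  have := hG.dist_triangle (u := w) (v := x) (w := z)
  have := hG.dist_triangle (u := x) (v := y) (w := z)
  unfold Between at *; omega

lemma trans_right (h₁ : G.Between w x z) (h₂ : G.Between x y z) : G.Between w y z := by
  have := hG.dist_triangle (u := w) (v := y) (w := z)
  have := hG.dist_triangle (u := w) (v := x) (w := y)
  unfold Between at *; omega

lemma trans_right_left (h₁ : G.Between w x z) (h₂ : G.Between x y z) : G.Between w x y := by
  have := hG.dist_triangle (u := w) (v := x) (w := y)
  have := hG.dist_triangle (u := w) (v := y) (w := z)
  unfold Between at *; omega

lemma eq_of_between (h₁ : G.Between r x y) (h₂ : G.Between r y x) : x = y := by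
  unfold Between at h₁ h₂
  rw [dist_comm (u := y)] at h₂
  exact hG.dist_eq_zero_iff.mp (by omega)

end Between

lemma Walk.between_of_mem_support {p : G.Walk u v} (hp : p.length = G.dist u v)
    (hy : y ∈ p.support) : G.Between u y v := by
  classical
  have hlen := congrArg length (p.take_spec hy)
  rw [Walk.length_append] at hlen
  have := dist_le (p.takeUntil y hy)
  have := dist_le (p.dropUntil y hy)
  have := (p.takeUntil y hy).reachable.dist_triangle_left v
  unfold Between; omega

lemma induce_connected_of_between (hG : G.Connected) {S : Set V} {c : V} (hc : c ∈ S)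
    (hS : ∀ x ∈ S, ∀ y, G.Between c y x → y ∈ S) : (G.induce S).Connected := by
  refine induce_connected_of_patches c hc fun {x} hx => ?_
  obtain ⟨p, hp⟩ := hG.exists_walk_length_eq_dist c x
  exact ⟨{y | y ∈ p.support}, fun y hy => hS x hx y (p.between_of_mem_support hp hy),
    p.start_mem_support, p.end_mem_support, p.connected_induce_support.preconnected _ _⟩

lemma Connected.exists_adj_between (hG : G.Connected) (h : x ≠ z) :
    ∃ y, G.Adj x y ∧ G.Between x y z := by
  obtain ⟨p, hp⟩ := hG.exists_walk_length_eq_dist x z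
  cases p with
  | nil => exact absurd rfl h
  | cons hxy q =>
    refine ⟨_, hxy, ?_⟩
    have := dist_le q
    have := hxy.reachable.dist_triangle_left z
    rw [Walk.length_cons] at hp
    rw [Between, dist_eq_one_iff_adj.mpr hxy] at *
    omega

namespace IsTree

variable (hT : G.IsTree)
include hT

lemma length_eq_dist {p : G.Walk u v} (hp : p.IsPath) : p.length = G.dist u v := by
  obtain ⟨q, hq, hqd⟩ := hT.connected.exists_path_of_dist u v
  rwa [(hT.existsUnique_path u v).unique hp hq]

lemma mem_support_of_between {p : G.Walk u v} (hp : p.IsPath) (h : G.Between u y v) :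
    y ∈ p.support := by
  obtain ⟨q₁, hq₁⟩ := hT.connected.exists_walk_length_eq_dist u y
  obtain ⟨q₂, hq₂⟩ := hT.connected.exists_walk_length_eq_dist y v
  have hq : (q₁.append q₂).IsPath :=
    (q₁.append q₂).isPath_of_length_eq_dist (by rw [Walk.length_append, hq₁, hq₂, h])
  rw [(hT.existsUnique_path u v).unique hp hq]
  exact q₁.support_subset_support_append_left q₂ q₁.end_mem_support

lemma between_of_dist_le (hy : G.Between r y x) (hz : G.Between r z x)
    (hyz : G.dist r y ≤ G.dist r z) : G.Between r y z := by
  classical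
  obtain ⟨p, hp, -⟩ := hT.connected.exists_path_of_dist r x
  have hyp := hT.mem_support_of_between hp hy
  have hzp := hT.mem_support_of_between hp hz
  have hpy : p.getVert (G.dist r y) = y := by
    rw [← hT.length_eq_dist (hp.takeUntil hyp), Walk.getVert_length_takeUntil]
  have hlen := hT.length_eq_dist (hp.takeUntil hzp)
  have hyq : y ∈ (p.takeUntil z hzp).support := by
    rw [← hpy, ← Walk.getVert_takeUntil hzp (hlen ▸ hyz)]
    exact Walk.getVert_mem_support _ _
  exact (p.takeUntil z hzp).between_of_mem_support hlen hyq

lemma eq_of_between_of_dist_eq (hy : G.Between r y x) (hz : G.Between r z x)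
    (hyz : G.dist r y = G.dist r z) : y = z := by
  have h := hT.between_of_dist_le hy hz hyz.le
  unfold Between at h
  exact hT.connected.dist_eq_zero_iff.mp (by omega)

lemma eq_of_adj_of_between (ha : G.Adj a x) (hb : G.Adj b x) (ha' : G.Between r a x)
    (hb' : G.Between r b x) : a = b := by
  refine hT.eq_of_between_of_dist_eq ha' hb' ?_
  unfold Between at ha' hb'
  rw [dist_eq_one_iff_adj.mpr ha] at ha'
  rw [dist_eq_one_iff_adj.mpr hb] at hb'
  omega

lemma between_or_between_of_adj (r : V) (hab : G.Adj a b) :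
    G.Between r a b ∨ G.Between r b a := by
  unfold Between
  rw [dist_eq_one_iff_adj.mpr hab, dist_eq_one_iff_adj.mpr hab.symm]
  have := hT.dist_eq_dist_add_one_of_adj r hab
  omega

end IsTree

lemma IsAcyclic.mem_edges_of_adj_start (hG : G.IsAcyclic) {p : G.Walk u x} (hp : p.IsPath)
    (huv : G.Adj u v) (hv : v ∈ p.support) : s(u, v) ∈ p.edges := by
  classical
  have h := hG.subsingleton_path u v |>.elim ⟨_, hp.takeUntil hv⟩ (.singleton huv)
  apply p.edges_takeUntil_subset_edges hv
  rw [Subtype.mk.inj h]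
  simp

lemma IsAcyclic.mem_edges_of_adj (hG : G.IsAcyclic) {p : G.Walk x z} (hp : p.IsPath)
    (hu : u ∈ p.support) (hv : v ∈ p.support) (huv : G.Adj u v) : s(u, v) ∈ p.edges := by
  classical
  rw [← p.take_spec hu, Walk.mem_support_append_iff] at hv
  rw [← p.take_spec hu, Walk.edges_append, List.mem_append]
  rcases hv with hv | hv
  · left
    simpa using hG.mem_edges_of_adj_start (hp.takeUntil hu).reverse huv (by simpa using hv)
  · exact .inr (hG.mem_edges_of_adj_start (hp.dropUntil hu) huv hv)

lemma IsTree.edges_eq_edgeSet_inter_sym2 (hT : G.IsTree) {p : G.Walk u v} (hp : p.IsPath) :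
    {e | e ∈ p.edges} = G.edgeSet ∩ {y | G.Between u y v}.sym2 := by
  ext e
  induction e using Sym2.ind with
  | _ a b =>
    refine ⟨fun he => ⟨p.edges_subset_edgeSet he, ?_, ?_⟩, fun ⟨he, ha, hb⟩ => ?_⟩
    · exact p.between_of_mem_support (hT.length_eq_dist hp) (p.fst_mem_support_of_mem_edges he)
    · exact p.between_of_mem_support (hT.length_eq_dist hp) (p.snd_mem_support_of_mem_edges he)
    · exact hT.isAcyclic.mem_edges_of_adj hp (hT.mem_support_of_between hp ha)
        (hT.mem_support_of_between hp hb) he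

/-- In a tree rooted at `r`, the vertices below `u` (including `u` itself). -/
def descendants (G : SimpleGraph V) (r u : V) : Set V := {x | G.Between r u x}

lemma descendants_self : G.descendants r r = Set.univ :=
  Set.eq_univ_of_forall fun _ => Between.refl_left

lemma Connected.induce_descendants (hG : G.Connected) (r u : V) :
    (G.induce (G.descendants r u)).Connected :=
  induce_connected_of_between hG Between.refl_right fun _ hx _ hy => hx.trans_right_left hG hy

lemma Connected.notMem_descendants_of_adj (hG : G.Connected) (hcu : G.Adj c u)
    (hrc : G.Between r c u) : c ∉ G.descendants r u :=
  fun hru => hcu.ne (hrc.eq_of_between hG hru)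

lemma Connected.induce_descendants_diff (hG : G.Connected) (hcu : G.Adj c u)
    (hrc : G.Between r c u) : (G.induce (G.descendants r c \ G.descendants r u)).Connected := by
  refine induce_connected_of_between hG
    ⟨Between.refl_right, hG.notMem_descendants_of_adj hcu hrc⟩ ?_
  rintro x ⟨hcx, hux⟩ y hy
  exact ⟨hcx.trans_right_left hG hy,
    fun huy => hux ((hcx.trans_right hG hy).trans_left hG huy)⟩

lemma IsTree.eq_and_between_of_adj_of_mem_descendants (hT : G.IsTree) (hab : G.Adj a b)
    (ha : a ∈ G.descendants r u) (hb : b ∉ G.descendants r u) :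
    a = u ∧ G.Between r b a := by
  have hba : G.Between r b a :=
    (hT.between_or_between_of_adj r hab).resolve_left fun h => hb (h.trans_left hT.connected ha)
  have hbu : G.dist r b < G.dist r u := by
    by_contra! h
    exact hb (hT.between_of_dist_le ha hba h)
  have := dist_eq_one_iff_adj.mpr hab.symm
  have hua : G.Between r u a := ha
  unfold Between at hba hua
  exact ⟨(hT.eq_of_between_of_dist_eq ha Between.refl_right (by omega)).symm, hba⟩

lemma IsTree.exists_degree_eq_one_mem_descendants [Fintype V] [DecidableRel G.Adj]
    (hT : G.IsTree) (hu : u ≠ r) : ∃ l ∈ G.descendants r u, G.degree l = 1 ∧ l ≠ r := by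
  classical
  obtain ⟨l, hl, hmax⟩ := (Finset.univ.filter (· ∈ G.descendants r u)).exists_max_image
    (G.dist r) ⟨u, Finset.mem_filter.mpr ⟨Finset.mem_univ _, Between.refl_right⟩⟩
  simp only [Finset.mem_filter, Finset.mem_univ, true_and] at hl hmax
  have hlr : l ≠ r := by
    rintro rfl
    exact hu (Between.refl_left.eq_of_between hT.connected hl).symm
  obtain ⟨b, hlb, hbr⟩ := hT.connected.exists_adj_between hlr
  refine ⟨l, hl, ?_, hlr⟩
  rw [← card_neighborFinset_eq_degree, Finset.card_eq_one]
  refine ⟨b, Finset.eq_singleton_iff_unique_mem.mpr ⟨(mem_neighborFinset _ _ _).mpr hlb,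
    fun b' hb' => ?_⟩⟩
  rw [mem_neighborFinset] at hb'
  rcases hT.between_or_between_of_adj r hb' with h | h
  · have := hmax b' (h.trans_left hT.connected hl)
    unfold Between at h
    rw [dist_eq_one_iff_adj.mpr hb'] at h
    omega
  · exact hT.eq_of_adj_of_between hb'.symm hlb.symm h hbr.symm

lemma IsTree.between_or_between_of_forall_degree_eq_one [Fintype V] [DecidableRel G.Adj]
    (hT : G.IsTree) (hw : ∀ l, G.degree l = 1 → l ≠ r → G.Between r w l) (x : V) :
    G.Between r x w ∨ G.Between r w x := by
  rcases eq_or_ne x r with rfl | hx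
  · exact .inl Between.refl_left
  obtain ⟨l, hxl, hl, hlr⟩ := hT.exists_degree_eq_one_mem_descendants hx
  rcases le_total (G.dist r x) (G.dist r w) with h | h
  · exact .inl (hT.between_of_dist_le hxl (hw l hl hlr) h)
  · exact .inr (hT.between_of_dist_le (hw l hl hlr) hxl h)

lemma disjoint_edgeSet_inter_sym2 {S₁ S₂ : Set V} (h : S₁ ∩ S₂ ⊆ {c}) :
    Disjoint (G.edgeSet ∩ S₁.sym2) (G.edgeSet ∩ S₂.sym2) := by
  rw [Set.disjoint_left]
  rintro e ⟨he, h₁⟩ ⟨-, h₂⟩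
  induction e using Sym2.ind with
  | _ a b =>
    rw [Set.mk_mem_sym2_iff] at h₁ h₂
    exact he.ne ((h ⟨h₁.1, h₂.1⟩).trans (h ⟨h₁.2, h₂.2⟩).symm)

lemma IsTree.edgeSet_inter_sym2_union (hT : G.IsTree)
    (hcover : ∀ x, G.Between r x w ∨ G.Between r w x) :
    G.edgeSet ∩ {x | G.Between r x w}.sym2 ∪ G.edgeSet ∩ (G.descendants r w).sym2 =
      G.edgeSet := by
  refine (Set.union_subset Set.inter_subset_left Set.inter_subset_left).antisymm fun e he => ?_
  induction e using Sym2.ind with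
  | _ a b =>
    have leaving : ∀ {a b}, G.Adj a b → a ∈ G.descendants r w → b ∉ G.descendants r w →
        G.Between r a w ∧ G.Between r b w := fun hab ha hb => by
      obtain ⟨rfl, hba⟩ := hT.eq_and_between_of_adj_of_mem_descendants hab ha hb
      exact ⟨Between.refl_right, hba⟩
    by_cases ha : a ∈ G.descendants r w <;> by_cases hb : b ∈ G.descendants r w
    · exact .inr ⟨he, ha, hb⟩
    · exact .inl ⟨he, leaving he ha hb⟩
    · exact .inl ⟨he, (leaving he.symm hb ha).symm⟩
    · exact .inl ⟨he, (hcover a).resolve_right ha, (hcover b).resolve_right hb⟩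

end SimpleGraph

open SimpleGraph

section

variable {V : Type} {T : SimpleGraph V} {c r u v w : V}

lemma isSubtree_edgeSet_inter_sym2 {S : Set V} (h : (T.induce S).Connected) :
    IsSubtree T S (T.edgeSet ∩ S.sym2) := by
  refine ⟨Set.inter_subset_left, fun e he x hx => Set.mem_sym2_iff_subset.mp he.2 hx, ?_⟩
  convert h using 1
  ext ⟨a, ha⟩ ⟨b, hb⟩
  simp only [comap_adj, Function.Embedding.coe_subtype, fromEdgeSet_adj, Set.mem_inter_iff,
    mem_edgeSet, Set.mk_mem_sym2_iff, ha, hb, and_true]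
  exact ⟨And.left, fun hab => ⟨hab, hab.ne⟩⟩

def IsSubtreeSplit [DecidableEq V] (T : SimpleGraph V) (c : V) (A : Set (Sym2 V))
    (Y : Finset V) : Prop :=
  ∃ (S₁ S₂ : Set V) (A₁ A₂ : Set (Sym2 V)),
    IsSubtree T S₁ A₁ ∧ IsSubtree T S₂ A₂ ∧ A₁ ∪ A₂ = A ∧ Disjoint A₁ A₂ ∧ c ∈ S₁ ∧ c ∈ S₂ ∧
    ∃ Y₁ Y₂ : Finset V, (↑Y₁ : Set V) ⊆ S₁ ∧ (↑Y₂ : Set V) ⊆ S₂ ∧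
      Y₁.Nonempty ∧ Y₂.Nonempty ∧ Disjoint Y₁ Y₂ ∧ Y₁ ∪ Y₂ = Y

def IsPathSplit [DecidableEq V] (T : SimpleGraph V) (v : V) (Y : Finset V) : Prop :=
  ∃ (w : V) (p : T.Walk v w), p.IsPath ∧
    ∃ (S₂ S₃ : Set V) (A₂ A₃ : Set (Sym2 V)),
      IsSubtree T S₂ A₂ ∧ IsSubtree T S₃ A₃ ∧
      {e | e ∈ p.edges} ∪ A₂ ∪ A₃ = T.edgeSet ∧
      Disjoint {e | e ∈ p.edges} A₂ ∧ Disjoint {e | e ∈ p.edges} A₃ ∧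
      Disjoint A₂ A₃ ∧ w ∈ S₂ ∧ w ∈ S₃ ∧
      ∃ Y₂ Y₃ : Finset V, (↑Y₂ : Set V) ⊆ S₂ ∧ (↑Y₃ : Set V) ⊆ S₃ ∧
        Y₂.Nonempty ∧ Y₃.Nonempty ∧ Disjoint Y₂ Y₃ ∧ Y₂ ∪ Y₃ = Y

lemma SimpleGraph.IsTree.isSubtreeSplit_of_adj [DecidableEq V] (hT : T.IsTree) (hcu : T.Adj c u)
    (hrc : T.Between r c u) {Y : Finset V} (hY : ↑Y ⊆ T.descendants r c)
    (h₁ : ∃ y ∈ Y, y ∈ T.descendants r u) (h₂ : ∃ y ∈ Y, y ∉ T.descendants r u) :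
    IsSubtreeSplit T c (T.edgeSet ∩ (T.descendants r c).sym2) Y := by
  classical
  set D := T.descendants r u
  have hDc : D ⊆ T.descendants r c := fun x hx => hx.trans_left hT.connected hrc
  have hcD : c ∉ D := hT.connected.notMem_descendants_of_adj hcu hrc
  have hS₁ : (T.induce (insert c D)).Connected := by
    rw [Set.insert_eq]
    exact connected_induce_union Preconnected.of_subsingleton
      (hT.connected.induce_descendants r u).preconnected rfl Between.refl_right hcu
  refine ⟨insert c D, T.descendants r c \ D, _, _, isSubtree_edgeSet_inter_sym2 hS₁,
    isSubtree_edgeSet_inter_sym2 (hT.connected.induce_descendants_diff hcu hrc), ?_,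
    disjoint_edgeSet_inter_sym2 (c := c) ?_, Set.mem_insert _ _, ⟨Between.refl_right, hcD⟩,
    Y.filter (· ∈ D), Y.filter (· ∉ D), ?_, ?_, ?_, ?_, Finset.disjoint_filter_filter_not _ _ _,
    Finset.filter_union_filter_not_eq _ _⟩
  · have parent : ∀ {a b}, T.Adj a b → a ∈ D → b ∉ D → b = c := fun hab ha hb => by
      obtain ⟨rfl, hba⟩ := hT.eq_and_between_of_adj_of_mem_descendants hab ha hb
      exact hT.eq_of_adj_of_between hab.symm hcu hba hrc
    have hS₁c : insert c D ⊆ T.descendants r c := Set.insert_subset Between.refl_right hDc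
    ext e
    induction e using Sym2.ind with
    | _ a b =>
      simp only [Set.mem_union, Set.mem_inter_iff, Set.mk_mem_sym2_iff, mem_edgeSet]
      refine ⟨?_, fun ⟨hab, ha, hb⟩ => ?_⟩
      · rintro (⟨hab, ha, hb⟩ | ⟨hab, ha, hb⟩)
        exacts [⟨hab, hS₁c ha, hS₁c hb⟩, ⟨hab, ha.1, hb.1⟩]
      by_cases haD : a ∈ D <;> by_cases hbD : b ∈ D
      · exact .inl ⟨hab, .inr haD, .inr hbD⟩
      · exact .inl ⟨hab, .inr haD, .inl (parent hab haD hbD)⟩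
      · exact .inl ⟨hab, .inl (parent hab.symm hbD haD), .inr hbD⟩
      · exact .inr ⟨hab, ⟨ha, haD⟩, hb, hbD⟩
  · rintro x ⟨hx₁ | hx₁, hx₂, hx₂'⟩
    · exact hx₁
    · exact absurd hx₁ hx₂'
  · intro x hx
    rw [Finset.mem_coe, Finset.mem_filter] at hx
    exact Set.mem_insert_of_mem _ hx.2
  · intro x hx
    rw [Finset.mem_coe, Finset.mem_filter] at hx
    exact ⟨hY hx.1, hx.2⟩
  · obtain ⟨y, hy, hyD⟩ := h₁
    exact ⟨y, Finset.mem_filter.mpr ⟨hy, hyD⟩⟩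
  · obtain ⟨y, hy, hyD⟩ := h₂
    exact ⟨y, Finset.mem_filter.mpr ⟨hy, hyD⟩⟩

lemma SimpleGraph.IsTree.isPathSplit_of_isSubtreeSplit [DecidableEq V] (hT : T.IsTree)
    {Y : Finset V} (hcover : ∀ x, T.Between r x w ∨ T.Between r w x)
    (hsplit : IsSubtreeSplit T w (T.edgeSet ∩ (T.descendants r w).sym2) Y) :
    IsPathSplit T r Y := by
  obtain ⟨p, hp, -⟩ := hT.connected.exists_path_of_dist r w
  obtain ⟨S₂, S₃, A₂, A₃, h₂, h₃, hunion, hdisj, hw₂, hw₃, hY⟩ := hsplit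
  have hpD : Disjoint {e | e ∈ p.edges} (T.edgeSet ∩ (T.descendants r w).sym2) := by
    rw [hT.edges_eq_edgeSet_inter_sym2 hp]
    exact disjoint_edgeSet_inter_sym2 fun x ⟨hxw, hwx⟩ => hxw.eq_of_between hT.connected hwx
  refine ⟨w, p, hp, S₂, S₃, A₂, A₃, h₂, h₃, ?_, hpD.mono_right (hunion ▸ Set.subset_union_left),
    hpD.mono_right (hunion ▸ Set.subset_union_right), hdisj, hw₂, hw₃, hY⟩
  rw [Set.union_assoc, hunion, hT.edges_eq_edgeSet_inter_sym2 hp,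
    hT.edgeSet_inter_sym2_union hcover]

lemma SimpleGraph.IsTree.isSubtreeSplit_edgeSet_erase [Fintype V] [DecidableEq V]
    [DecidableRel T.Adj] (hT : T.IsTree) {X : Finset V} (hX : (X.erase v).Nonempty)
    (hleaf : ∀ u : V, T.degree u = 1 → u ∈ X) (hdeg : T.degree v ≠ 1) :
    IsSubtreeSplit T v T.edgeSet (X.erase v) := by
  obtain ⟨x, hx⟩ := hX
  obtain ⟨u₀, hu₀, -⟩ := hT.connected.exists_adj_between (Finset.ne_of_mem_erase hx).symm
  have hpos : 0 < T.degree v := (T.degree_pos_iff_exists_adj v).mpr ⟨u₀, hu₀⟩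
  obtain ⟨u₁, hu₁, hne⟩ := (T.neighborFinset v).exists_mem_ne
    (by rw [card_neighborFinset_eq_degree]; omega) u₀
  rw [mem_neighborFinset] at hu₁
  have leaf_mem : ∀ l, T.degree l = 1 → l ≠ v → l ∈ X.erase v :=
    fun l hl hlv => Finset.mem_erase.mpr ⟨hlv, hleaf l hl⟩
  obtain ⟨l₀, hl₀, hdeg₀, hl₀v⟩ := hT.exists_degree_eq_one_mem_descendants hu₀.ne'
  obtain ⟨l₁, hl₁, hdeg₁, hl₁v⟩ := hT.exists_degree_eq_one_mem_descendants hu₁.ne'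
  have hl₁u₀ : l₁ ∉ T.descendants v u₀ := fun h => hne <| hT.eq_of_between_of_dist_eq hl₁ h <| by
    rw [dist_eq_one_iff_adj.mpr hu₀, dist_eq_one_iff_adj.mpr hu₁]
  have := hT.isSubtreeSplit_of_adj hu₀ Between.refl_left (Y := X.erase v)
    (by simp [descendants_self]) ⟨l₀, leaf_mem l₀ hdeg₀ hl₀v, hl₀⟩
    ⟨l₁, leaf_mem l₁ hdeg₁ hl₁v, hl₁u₀⟩
  rwa [descendants_self, Set.sym2_univ, Set.inter_univ] at this

lemma SimpleGraph.IsTree.isPathSplit_erase [Fintype V] [DecidableEq V]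
    [DecidableRel T.Adj] (hT : T.IsTree) {X : Finset V} (hX : 1 < (X.erase v).card)
    (hleaf : ∀ u : V, T.degree u = 1 → u ∈ X) :
    IsPathSplit T v (X.erase v) := by
  classical
  -- `w` is the lowest common ancestor of `X \ {v}` in the tree rooted at `v`.
  obtain ⟨w, hw, hwmax⟩ := (Finset.univ.filter fun w => ∀ y ∈ X.erase v, T.Between v w y)
    |>.exists_max_image (T.dist v) ⟨v, by simp [Between.refl_left]⟩
  simp only [Finset.mem_filter, Finset.mem_univ, true_and] at hw hwmax
  obtain ⟨x₀, hx₀, hx₀w⟩ := (X.erase v).exists_mem_ne hX w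
  obtain ⟨c, hwc, hcx₀⟩ := hT.connected.exists_adj_between hx₀w.symm
  have hvwc : T.Between v w c := (hw x₀ hx₀).trans_right_left hT.connected hcx₀
  obtain ⟨x₁, hx₁, hcx₁⟩ : ∃ x₁ ∈ X.erase v, ¬T.Between v c x₁ := by
    by_contra! h
    have := hwmax c h
    unfold Between at hvwc
    rw [dist_eq_one_iff_adj.mpr hwc] at hvwc
    omega
  exact hT.isPathSplit_of_isSubtreeSplit
    (hT.between_or_between_of_forall_degree_eq_one fun l hl hlv =>
      hw l (Finset.mem_erase.mpr ⟨hlv, hleaf l hl⟩))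
    (hT.isSubtreeSplit_of_adj hwc hvwc (fun y hy => hw y hy)
      ⟨x₀, hx₀, (hw x₀ hx₀).trans_right hT.connected hcx₀⟩ ⟨x₁, hx₁, hcx₁⟩)

end

theorem stmt_12_general {V : Type} [Fintype V] [DecidableEq V] (T : SimpleGraph V)
    [DecidableRel T.Adj] (hT : T.IsTree) (X : Finset V) (hX : 3 ≤ X.card)
    (hleaf : ∀ u : V, T.degree u = 1 → u ∈ X) (v : V) :
    (T.degree v ≠ 1 ∧
      ∃ (S₁ S₂ : Set V) (A₁ A₂ : Set (Sym2 V)),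
        IsSubtree T S₁ A₁ ∧ IsSubtree T S₂ A₂ ∧
        A₁ ∪ A₂ = T.edgeSet ∧ Disjoint A₁ A₂ ∧ v ∈ S₁ ∧ v ∈ S₂ ∧
        ∃ Y₁ Y₂ : Finset V, (↑Y₁ : Set V) ⊆ S₁ ∧ (↑Y₂ : Set V) ⊆ S₂ ∧
          Y₁.Nonempty ∧ Y₂.Nonempty ∧ Disjoint Y₁ Y₂ ∧ Y₁ ∪ Y₂ = X.erase v) ∨
    (T.degree v = 1 ∧
      ∃ (w : V) (p : T.Walk v w), p.IsPath ∧
      ∃ (S₂ S₃ : Set V) (A₂ A₃ : Set (Sym2 V)),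
        IsSubtree T S₂ A₂ ∧ IsSubtree T S₃ A₃ ∧
        {e | e ∈ p.edges} ∪ A₂ ∪ A₃ = T.edgeSet ∧
        Disjoint {e | e ∈ p.edges} A₂ ∧ Disjoint {e | e ∈ p.edges} A₃ ∧
        Disjoint A₂ A₃ ∧ w ∈ S₂ ∧ w ∈ S₃ ∧
        ∃ Y₂ Y₃ : Finset V, (↑Y₂ : Set V) ⊆ S₂ ∧ (↑Y₃ : Set V) ⊆ S₃ ∧
          Y₂.Nonempty ∧ Y₃.Nonempty ∧ Disjoint Y₂ Y₃ ∧ Y₂ ∪ Y₃ = X.erase v) := by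
  have hXv : 1 < (X.erase v).card := by
    have := X.pred_card_le_card_erase (a := v)
    omega
  by_cases hdeg : T.degree v = 1
  · exact .inr ⟨hdeg, hT.isPathSplit_erase hXv hleaf⟩
  · exact .inl ⟨hdeg, hT.isSubtreeSplit_edgeSet_erase (Finset.card_pos.mp (by omega)) hleaf hdeg⟩

/-- let `T` be a finite tree, `X` a set of at least 3 vertices
containing all leaves of `T`, and `v ∈ X`. Then either `v` is internal and `E(T)`
can be partitioned into two edge-disjoint subtrees both containing `v` whose
`X`-vertices other than `v` form a nontrivial partition of `X \ {v}`; or `v` is a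
leaf and `E(T)` can be partitioned into a path from `v` to some vertex `w` plus
two edge-disjoint subtrees containing `w`, which split `X \ {v}` nontrivially. -/
theorem stmt_12 {V : Type} [Fintype V] [DecidableEq V] (T : SimpleGraph V)
    [DecidableRel T.Adj] (hT : T.IsTree) (X : Finset V) (hX : 3 ≤ X.card)
    (hleaf : ∀ u : V, T.degree u = 1 → u ∈ X) (v : V) (hv : v ∈ X) :
    (T.degree v ≠ 1 ∧
      ∃ (S₁ S₂ : Set V) (A₁ A₂ : Set (Sym2 V)),
        IsSubtree T S₁ A₁ ∧ IsSubtree T S₂ A₂ ∧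
        A₁ ∪ A₂ = T.edgeSet ∧ Disjoint A₁ A₂ ∧ v ∈ S₁ ∧ v ∈ S₂ ∧
        ∃ Y₁ Y₂ : Finset V, (↑Y₁ : Set V) ⊆ S₁ ∧ (↑Y₂ : Set V) ⊆ S₂ ∧
          Y₁.Nonempty ∧ Y₂.Nonempty ∧ Disjoint Y₁ Y₂ ∧ Y₁ ∪ Y₂ = X.erase v) ∨
    (T.degree v = 1 ∧
      ∃ (w : V) (p : T.Walk v w), p.IsPath ∧
      ∃ (S₂ S₃ : Set V) (A₂ A₃ : Set (Sym2 V)),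
        IsSubtree T S₂ A₂ ∧ IsSubtree T S₃ A₃ ∧
        {e | e ∈ p.edges} ∪ A₂ ∪ A₃ = T.edgeSet ∧
        Disjoint {e | e ∈ p.edges} A₂ ∧ Disjoint {e | e ∈ p.edges} A₃ ∧
        Disjoint A₂ A₃ ∧ w ∈ S₂ ∧ w ∈ S₃ ∧
        ∃ Y₂ Y₃ : Finset V, (↑Y₂ : Set V) ⊆ S₂ ∧ (↑Y₃ : Set V) ⊆ S₃ ∧
          Y₂.Nonempty ∧ Y₃.Nonempty ∧ Disjoint Y₂ Y₃ ∧ Y₂ ∪ Y₃ = X.erase v) :=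
  stmt_12_general T hT X hX hleaf v
end

section
/- Let v_1,...,v_n be intervals sorted by left endpoint with distinct endpoints, colored by f(v_i) ∈ {+1, −1}, and define bcs(i, k, d) as before. Then for i ≥ 1 and k = r_i and d ≠ f(v_i): bcs(i, r_i, d) = max over k' with l_i < k' < r_i of bcs(i−1, k', d − f(v_i)) + 1; and for d = f(v_i): bcs(i, r_i, d) = max{1, max over l_i < k' < r_i of bcs(i−1, k', d − f(v_i)) + 1}. -/
/-- The interval graph of the integer intervals `[l v, r v]`, `v : Fin n`:
two distinct vertices are adjacent iff their intervals intersect. -/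
def intervalGraphZ {n : ℕ} (l r : Fin n → ℤ) : SimpleGraph (Fin n) where
  Adj u v := u ≠ v ∧ max (l u) (l v) ≤ min (r u) (r v)
  symm := by
    constructor
    intro u v ⟨h₁, h₂⟩
    exact ⟨h₁.symm, by rw [max_comm, min_comm]; exact h₂⟩
  loopless := by constructor; intro u h; exact h.1 rfl

/-- `bcsI l r f i k d`: the maximum cardinality of a nonempty set `S` of interval
indices `< i` that is connected in the interval graph, has `max_{v ∈ S} r v = k`,
and has `∑_{v ∈ S} f v = d`; it is `⊥` (= -∞) if no such set exists. -/
noncomputable def bcsI {n : ℕ} (l r f : Fin n → ℤ) (i : ℕ) (k d : ℤ) : WithBot ℕ∞ :=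
  sSup {m | ∃ S : Finset (Fin n), S.Nonempty ∧ (∀ v ∈ S, (v : ℕ) < i) ∧
    ((intervalGraphZ l r).induce (↑S : Set (Fin n))).Connected ∧
    (∃ v ∈ S, r v = k) ∧ (∀ v ∈ S, r v ≤ k) ∧ (∑ v ∈ S, f v) = d ∧
    m = ((S.card : ℕ∞) : WithBot ℕ∞)}

/-!
If `S` is feasible for `bcs(i+1, r_i, d)`, then `v_i ∈ S`, being the only interval ending at
`r_i`, and every other member of `S` starts before `l_i`. The neighbours of `v_i` in `S` therefore
all contain the point `l_i` and form a clique, so deleting `v_i` keeps `S` connected; what remains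
ends at some `k'` with `l_i < k' < r_i`, strictly because all endpoints are distinct. Conversely,
`v_i` meets the member ending at `k'` of any feasible set for `bcs(i, k', ·)`, so it can be added.
-/

namespace SimpleGraph

variable {V : Type*} {G : SimpleGraph V}

theorem Preconnected.induce_compl_singleton_of_isClique (hG : G.Preconnected) {v : V}
    (hv : G.IsClique (G.neighborSet v)) : (G.induce {v}ᶜ).Preconnected := by
  -- A walk through `v` enters and leaves it via two neighbours of `v`, which are adjacent.
  have step : ∀ {a b : V} (ha : a ≠ v) (hb : b ≠ v), G.Adj a b →
      (G.induce {v}ᶜ).Reachable ⟨a, ha⟩ ⟨b, hb⟩ := fun _ _ hab => Adj.reachable hab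
  have key : ∀ {x w : V} (p : G.Walk x w) (hw : w ≠ v) (u : V) (hu : u ≠ v),
      u = x ∨ x = v ∧ G.Adj u v → (G.induce {v}ᶜ).Reachable ⟨u, hu⟩ ⟨w, hw⟩ := by
    intro x w p
    induction p with
    | nil =>
      rintro hw u hu (rfl | ⟨rfl, -⟩)
      · rfl
      · exact absurd rfl hw
    | @cons x y w hxy q ih =>
      rintro hw u hu hux
      by_cases hy : y = v
      · subst hy
        rcases hux with rfl | ⟨rfl, -⟩
        · exact ih hw u hu (Or.inr ⟨rfl, hxy⟩)
        · exact absurd rfl hxy.ne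
      have hyw := ih hw y hy (Or.inl rfl)
      rcases hux with rfl | ⟨rfl, huv⟩
      · exact (step hu hy hxy).trans hyw
      · obtain rfl | huy := eq_or_ne u y
        · exact hyw
        · exact (step hu hy (hv huv.symm hxy huy)).trans hyw
  rintro ⟨u, hu⟩ ⟨w, hw⟩
  exact key (hG u w).some hw u hu (Or.inl rfl)

theorem Preconnected.induce_diff_singleton_of_isClique {s : Set V}
    (hs : (G.induce s).Preconnected) {v : V} (hvs : v ∈ s)
    (hv : G.IsClique (G.neighborSet v ∩ s)) : (G.induce (s \ {v})).Preconnected := by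
  have hclique : (G.induce s).IsClique ((G.induce s).neighborSet ⟨v, hvs⟩) :=
    fun a ha b hb hab => hv ⟨ha, a.2⟩ ⟨hb, b.2⟩ (Subtype.coe_injective.ne hab)
  let φ : (G.induce s).induce {⟨v, hvs⟩}ᶜ →g G.induce (s \ {v}) :=
    { toFun x := ⟨x.1.1, x.1.2, fun h => x.2 (Subtype.ext h)⟩, map_rel' := id }
  rintro ⟨u, hus, huv⟩ ⟨w, hws, hwv⟩
  exact (hs.induce_compl_singleton_of_isClique hclique
    ⟨⟨u, hus⟩, fun h => huv (congrArg Subtype.val h)⟩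
    ⟨⟨w, hws⟩, fun h => hwv (congrArg Subtype.val h)⟩).map φ

theorem Preconnected.exists_adj_of_mem_induce {s : Set V} (hs : (G.induce s).Preconnected)
    {u v : V} (hu : u ∈ s) (hv : v ∈ s) (huv : u ≠ v) : ∃ x ∈ s, G.Adj v x := by
  have : Nontrivial s := ⟨⟨⟨u, hu⟩, ⟨v, hv⟩, fun h => huv (congrArg Subtype.val h)⟩⟩
  obtain ⟨x, hx⟩ := hs.exists_adj_of_nontrivial ⟨v, hv⟩
  exact ⟨x, x.2, hx⟩

theorem Connected.induce_insert_s17 {s : Set V} (hs : (G.induce s).Connected) {v w : V}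
    (hw : w ∈ s) (hvw : G.Adj v w) : (G.induce (insert v s)).Connected := by
  rw [Set.insert_eq]
  exact connected_induce_union (by rw [induce_singleton_eq_top]; exact preconnected_top)
    hs.preconnected (Set.mem_singleton v) hw hvw

end SimpleGraph

open SimpleGraph

section IntervalGraph

variable {n : ℕ} {l r f : Fin n → ℤ}

theorem intervalGraphZ_isClique_neighborSet_inter {s : Set (Fin n)} {i : Fin n}
    (hs : ∀ v ∈ s, v ≠ i → l v < l i) :
    (intervalGraphZ l r).IsClique ((intervalGraphZ l r).neighborSet i ∩ s) := by
  rintro a ⟨⟨hia, hai⟩, has⟩ b ⟨⟨hib, hbi⟩, hbs⟩ hab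
  have ha := hs a has (Ne.symm hia)
  have hb := hs b hbs (Ne.symm hib)
  refine ⟨hab, ?_⟩
  simp only [max_le_iff, le_min_iff] at *
  omega

variable (l r f) in
structure IsBcsSet (j : ℕ) (k d : ℤ) (S : Finset (Fin n)) : Prop where
  nonempty : S.Nonempty
  val_lt : ∀ v ∈ S, (v : ℕ) < j
  connected : ((intervalGraphZ l r).induce (↑S : Set (Fin n))).Connected
  exists_right_eq : ∃ v ∈ S, r v = k
  right_le : ∀ v ∈ S, r v ≤ k
  sum_eq : ∑ v ∈ S, f v = d

variable {j : ℕ} {k d : ℤ} {S : Finset (Fin n)}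

theorem IsBcsSet.card_le_bcsI (hS : IsBcsSet l r f j k d S) :
    ((S.card : ℕ∞) : WithBot ℕ∞) ≤ bcsI l r f j k d :=
  le_sSup ⟨S, hS.1, hS.2, hS.3, hS.4, hS.5, hS.6, rfl⟩

theorem bcsI_le {m : WithBot ℕ∞}
    (h : ∀ S, IsBcsSet l r f j k d S → ((S.card : ℕ∞) : WithBot ℕ∞) ≤ m) :
    bcsI l r f j k d ≤ m :=
  sSup_le <| by rintro _ ⟨S, h₁, h₂, h₃, h₄, h₅, h₆, rfl⟩; exact h S ⟨h₁, h₂, h₃, h₄, h₅, h₆⟩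

theorem bcsI_eq_bot_or_exists :
    bcsI l r f j k d = ⊥ ∨ ∃ S, IsBcsSet l r f j k d S ∧ bcsI l r f j k d = (S.card : ℕ∞) := by
  classical
  by_cases h : ∃ S, IsBcsSet l r f j k d S
  · obtain ⟨S, hS, hmax⟩ := (Finset.univ.filter (IsBcsSet l r f j k d)).exists_max_image
      Finset.card (h.imp fun S hS => Finset.mem_filter.2 ⟨Finset.mem_univ S, hS⟩)
    simp only [Finset.mem_filter, Finset.mem_univ, true_and] at hS hmax
    refine Or.inr ⟨S, hS, le_antisymm (bcsI_le fun T hT => ?_) hS.card_le_bcsI⟩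
    exact_mod_cast hmax T hT
  · exact Or.inl (le_bot_iff.1 (bcsI_le fun S hS => (h ⟨S, hS⟩).elim))

variable {i : Fin n} {k' : ℤ}

theorem IsBcsSet.insert (hsort : ∀ u v : Fin n, u < v → l u < l v)
    (hS : IsBcsSet l r f i k' (d - f i) S) (hk₁ : l i < k') (hk₂ : k' < r i) :
    IsBcsSet l r f (i + 1) (r i) d (insert i S) := by
  obtain ⟨v, hvS, hvk⟩ := hS.exists_right_eq
  have hiS : i ∉ S := fun h => (hS.val_lt i h).false
  have hvi : l v < l i := hsort v i (hS.val_lt v hvS)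
  have hadj : (intervalGraphZ l r).Adj i v := by
    refine ⟨fun h => hiS (h ▸ hvS), ?_⟩
    simp only [max_le_iff, le_min_iff]
    omega
  refine ⟨Finset.insert_nonempty i S, ?_, ?_, ⟨i, Finset.mem_insert_self i S, rfl⟩, ?_, ?_⟩
  · simp only [Finset.mem_insert, forall_eq_or_imp, Nat.lt_succ_self, true_and]
    exact fun u hu => (hS.val_lt u hu).trans (Nat.lt_succ_self _)
  · rw [Finset.coe_insert]
    exact hS.connected.induce_insert_s17 hvS hadj
  · simp only [Finset.mem_insert, forall_eq_or_imp, le_refl, true_and]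
    exact fun u hu => (hS.right_le u hu).trans hk₂.le
  · rw [Finset.sum_insert hiS, hS.sum_eq]
    ring

theorem bcsI_add_one_le (hsort : ∀ u v : Fin n, u < v → l u < l v)
    (hk₁ : l i < k') (hk₂ : k' < r i) :
    bcsI l r f i k' (d - f i) + 1 ≤ bcsI l r f (i + 1) (r i) d := by
  obtain h | ⟨S, hS, h⟩ := @bcsI_eq_bot_or_exists _ l r f i k' (d - f i)
  · simp [h]
  have hiS : i ∉ S := fun h => (hS.val_lt i h).false
  calc bcsI l r f i k' (d - f i) + 1 = (((insert i S).card : ℕ∞) : WithBot ℕ∞) := by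
        rw [h, Finset.card_insert_of_notMem hiS]; push_cast; rfl
    _ ≤ _ := (hS.insert hsort hk₁ hk₂).card_le_bcsI

theorem IsBcsSet.mem_of_right_eq (hdist : Function.Injective (Sum.elim l r : Fin n ⊕ Fin n → ℤ))
    (hS : IsBcsSet l r f j (r i) d S) : i ∈ S := by
  obtain ⟨v, hvS, hv⟩ := hS.exists_right_eq
  rwa [← hdist.comp Sum.inr_injective hv]

theorem IsBcsSet.erase (hsort : ∀ u v : Fin n, u < v → l u < l v)
    (hdist : Function.Injective (Sum.elim l r : Fin n ⊕ Fin n → ℤ))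
    (hS : IsBcsSet l r f (i + 1) (r i) d S) (hne : (S.erase i).Nonempty) :
    ∃ k', l i < k' ∧ k' < r i ∧ IsBcsSet l r f i k' (d - f i) (S.erase i) := by
  have hiS : i ∈ S := hS.mem_of_right_eq hdist
  have hlt : ∀ v ∈ S.erase i, v < i := by
    intro v hv
    obtain ⟨hvi, hvS⟩ := Finset.mem_erase.1 hv
    have := hS.val_lt v hvS
    have := Fin.val_injective.ne hvi
    exact Fin.lt_def.2 (by omega)
  have hconn : ((intervalGraphZ l r).induce (↑(S.erase i) : Set (Fin n))).Connected := by
    have : Nonempty (↑(S.erase i) : Set (Fin n)) := hne.coe_sort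
    rw [Finset.coe_erase]
    refine (connected_iff _).2 ⟨?_, by rwa [← Finset.coe_erase]⟩
    refine hS.connected.preconnected.induce_diff_singleton_of_isClique hiS
      (intervalGraphZ_isClique_neighborSet_inter fun v hv hvi => hsort v i (hlt v ?_))
    exact Finset.mem_erase.2 ⟨hvi, hv⟩
  obtain ⟨u, hu⟩ := hne
  obtain ⟨x, hxS, hix⟩ := hS.connected.preconnected.exists_adj_of_mem_induce
    (Finset.mem_coe.2 (Finset.mem_of_mem_erase hu)) hiS (Finset.mem_erase.1 hu).1
  have hx : x ∈ S.erase i := Finset.mem_erase.2 ⟨hix.ne.symm, hxS⟩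
  refine ⟨(S.erase i).sup' ⟨u, hu⟩ r, ?_, ?_, ⟨⟨u, hu⟩, fun v hv => hlt v hv, hconn, ?_,
    fun v hv => Finset.le_sup' r hv, ?_⟩⟩
  · have hlx : l i ≤ r x := by
      obtain ⟨-, h⟩ := hix
      simp only [max_le_iff, le_min_iff] at h
      exact h.2.1
    have hlx' : l i ≠ r x := hdist.ne Sum.inl_ne_inr
    exact (lt_of_le_of_ne hlx hlx').trans_le (Finset.le_sup' r hx)
  · refine (Finset.sup'_lt_iff _).2 fun v hv => lt_of_le_of_ne ?_ ?_
    · exact hS.right_le v (Finset.mem_of_mem_erase hv)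
    · exact (hdist.comp Sum.inr_injective).ne (Finset.mem_erase.1 hv).1
  · obtain ⟨v, hv, hvk⟩ := Finset.exists_mem_eq_sup' ⟨u, hu⟩ r
    exact ⟨v, hv, hvk.symm⟩
  · rw [Finset.sum_erase_eq_sub hiS, hS.sum_eq]

theorem IsBcsSet.eq_singleton_or_card_le (hsort : ∀ u v : Fin n, u < v → l u < l v)
    (hdist : Function.Injective (Sum.elim l r : Fin n ⊕ Fin n → ℤ))
    (hS : IsBcsSet l r f (i + 1) (r i) d S) :
    S = {i} ∨ ((S.card : ℕ∞) : WithBot ℕ∞) ≤ sSup {m | ∃ k' : ℤ, l i < k' ∧ k' < r i ∧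
      m = bcsI l r f (i : ℕ) k' (d - f i) + 1} := by
  have hiS : i ∈ S := hS.mem_of_right_eq hdist
  obtain hempty | hne := (S.erase i).eq_empty_or_nonempty
  · exact Or.inl (by rw [← Finset.insert_erase hiS, hempty]; rfl)
  obtain ⟨k', hk₁, hk₂, hS'⟩ := hS.erase hsort hdist hne
  refine Or.inr (le_trans ?_ (le_sSup ⟨k', hk₁, hk₂, rfl⟩))
  calc ((S.card : ℕ∞) : WithBot ℕ∞) = (((S.erase i).card : ℕ∞) : WithBot ℕ∞) + 1 := by
        rw [← Finset.card_erase_add_one hiS]; push_cast; rfl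
    _ ≤ _ := add_le_add_left hS'.card_le_bcsI 1

theorem one_le_bcsI_self : 1 ≤ bcsI l r f (i + 1) (r i) (f i) := by
  refine le_of_eq_of_le ?_ (IsBcsSet.card_le_bcsI (S := {i}) ⟨Finset.singleton_nonempty i,
    ?_, ?_, ⟨i, Finset.mem_singleton_self i, rfl⟩, ?_, Finset.sum_singleton f i⟩)
  · rfl
  · simp
  · rw [Finset.coe_singleton, induce_singleton_eq_top]
    exact connected_top
  · simp

end IntervalGraph

theorem stmt_17_general {n : ℕ} (l r f : Fin n → ℤ)
    (hsort : ∀ u v : Fin n, u < v → l u < l v)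
    (hdist : Function.Injective (Sum.elim l r : Fin n ⊕ Fin n → ℤ))
    (i : Fin n) (d : ℤ) :
    (d ≠ f i → bcsI l r f ((i : ℕ) + 1) (r i) d =
      sSup {m | ∃ k' : ℤ, l i < k' ∧ k' < r i ∧
        m = bcsI l r f (i : ℕ) k' (d - f i) + 1}) ∧
    (d = f i → bcsI l r f ((i : ℕ) + 1) (r i) d =
      1 ⊔ sSup {m | ∃ k' : ℤ, l i < k' ∧ k' < r i ∧
        m = bcsI l r f (i : ℕ) k' (d - f i) + 1}) := by
  have hle : sSup {m | ∃ k' : ℤ, l i < k' ∧ k' < r i ∧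
      m = bcsI l r f (i : ℕ) k' (d - f i) + 1} ≤ bcsI l r f ((i : ℕ) + 1) (r i) d :=
    sSup_le <| by rintro _ ⟨k', hk₁, hk₂, rfl⟩; exact bcsI_add_one_le hsort hk₁ hk₂
  refine ⟨fun hd => le_antisymm (bcsI_le fun S hS => ?_) hle, ?_⟩
  · obtain rfl | hcard := hS.eq_singleton_or_card_le hsort hdist
    · exact absurd (by simpa using hS.sum_eq.symm) hd
    · exact hcard
  · rintro rfl
    refine le_antisymm (bcsI_le fun S hS => ?_) (sup_le one_le_bcsI_self hle)
    obtain rfl | hcard := hS.eq_singleton_or_card_le hsort hdist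
    · exact le_sup_of_le_left (by simp)
    · exact le_sup_of_le_right hcard

/-- the interval DP recurrence in the case `k = r i`: if `d ≠ f i`
then `bcs(i+1, r i, d) = max over l i < k' < r i of bcs(i, k', d - f i) + 1`, and
if `d = f i` then additionally the singleton `{v_i}` is feasible, so
`bcs(i+1, r i, d) = max (1, max over l i < k' < r i of bcs(i, k', d - f i) + 1)`. -/
theorem stmt_17 {n : ℕ} (l r f : Fin n → ℤ)
    (hsort : ∀ u v : Fin n, u < v → l u < l v)
    (hlr : ∀ v, l v < r v)
    (hdist : Function.Injective (Sum.elim l r : Fin n ⊕ Fin n → ℤ))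
    (hf : ∀ v, f v = 1 ∨ f v = -1)
    (i : Fin n) (d : ℤ) :
    (d ≠ f i → bcsI l r f ((i : ℕ) + 1) (r i) d =
      sSup {m | ∃ k' : ℤ, l i < k' ∧ k' < r i ∧
        m = bcsI l r f (i : ℕ) k' (d - f i) + 1}) ∧
    (d = f i → bcsI l r f ((i : ℕ) + 1) (r i) d =
      1 ⊔ sSup {m | ∃ k' : ℤ, l i < k' ∧ k' < r i ∧
        m = bcsI l r f (i : ℕ) k' (d - f i) + 1}) :=
  stmt_17_general l r f hsort hdist i d
end
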